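/- arXiv:1507.06479 — 8 statements merged into one kernel-verified Lean document; each statement's English description precedes it below -/
import Mathlib

section
/- (Typicality of thermal equilibrium.) Let E be a finite-dimensional complex inner product space of dimension D ≥ 1, let μ be the uniform probability measure on the unit sphere of E, and let P be a positive semidefinite self-adjoint operator on E. Let V > 0 and 0 < α < γ be real constants, and assume the thermodynamic bound (Tr P)/D ≤ exp(−γV). Then μ{ φ on the unit sphere : ⟨φ, P φ⟩ > exp(−αV) } ≤ exp(−(γ−α)V); that is, with probability at least 1 − exp(−(γ−α)V) a randomly chosen normalized state φ satisfies ⟨φ, P φ⟩ ≤ exp(−αV). -/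
/-!
Diagonalise `P` in an orthonormal eigenbasis `b`, so that `re ⟪φ, P φ⟫ = ∑ λᵢ ‖⟪bᵢ, φ⟫‖²`.
Unitary invariance of `μ` (through the isometry swapping two basis vectors) makes all the
integrals `∫ ‖⟪bᵢ, φ⟫‖² dμ` equal, and they sum to `1` on the unit sphere, so each is `1 / D`.
Hence the mean of `⟪φ, P φ⟫` is the microcanonical average `Tr P / D ≤ exp (-γV)`, and
Markov's inequality at level `exp (-αV)` gives the bound.
-/

open MeasureTheory
open scoped InnerProductSpace

section

variable {𝕜 E ι : Type*} [RCLike 𝕜] [NormedAddCommGroup E] [InnerProductSpace 𝕜 E] [Fintype ι]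

lemma LinearMap.IsSymmetric.re_inner_map_self_eq_sum [FiniteDimensional 𝕜 E] {T : E →ₗ[𝕜] E}
    {n : ℕ} (hT : T.IsSymmetric) (hn : Module.finrank 𝕜 E = n) (x : E) :
    RCLike.re ⟪x, T x⟫_𝕜 =
      ∑ i, hT.eigenvalues hn i * ‖(hT.eigenvectorBasis hn).repr x i‖ ^ 2 := by
  rw [← (hT.eigenvectorBasis hn).repr.inner_map_map, PiLp.inner_apply, map_sum]
  simp_rw [hT.eigenvectorBasis_apply_self_apply]
  congr 1 with i
  rw [RCLike.inner_apply, mul_assoc, RCLike.mul_conj, ← RCLike.ofReal_pow, RCLike.re_ofReal_mul,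
    RCLike.ofReal_re]

variable [MeasurableSpace E] [BorelSpace E] {μ : Measure E}

lemma OrthonormalBasis.integral_norm_sq_repr_eq_of_map_eq
    (hinv : ∀ U : E ≃ₗᵢ[𝕜] E, μ.map U = μ) (b : OrthonormalBasis ι 𝕜 E) (i j : ι) :
    ∫ x, ‖b.repr x i‖ ^ 2 ∂μ = ∫ x, ‖b.repr x j‖ ^ 2 ∂μ := by
  classical
  let U : E ≃ₗᵢ[𝕜] E :=
    b.repr.trans ((LinearIsometryEquiv.piLpCongrLeft 2 𝕜 𝕜 (Equiv.swap i j)).trans b.repr.symm)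
  have hU : ∀ x, b.repr (U x) j = b.repr x i := fun x => by simp [U, Equiv.piCongrLeft']
  calc ∫ x, ‖b.repr x i‖ ^ 2 ∂μ = ∫ x, ‖b.repr (U x) j‖ ^ 2 ∂μ := by simp_rw [hU]
    _ = ∫ x, ‖b.repr x j‖ ^ 2 ∂(μ.map U) :=
      (integral_map U.continuous.aemeasurable
        (by fun_prop : Continuous fun x => ‖b.repr x j‖ ^ 2).aestronglyMeasurable).symm
    _ = ∫ x, ‖b.repr x j‖ ^ 2 ∂μ := by rw [hinv U]

lemma OrthonormalBasis.integrable_norm_sq_repr [IsFiniteMeasure μ] (hsphere : ∀ᵐ x ∂μ, ‖x‖ = 1)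
    (b : OrthonormalBasis ι 𝕜 E) (i : ι) : Integrable (fun x => ‖b.repr x i‖ ^ 2) μ := by
  refine Integrable.mono' (integrable_const 1) (by fun_prop) ?_
  filter_upwards [hsphere] with x hx
  have : ‖b.repr x i‖ ≤ 1 := hx ▸ b.repr.norm_map x ▸ PiLp.norm_apply_le _ i
  rw [Real.norm_of_nonneg (by positivity)]
  exact pow_le_one₀ (norm_nonneg _) this

variable [IsProbabilityMeasure μ]

lemma OrthonormalBasis.integral_norm_sq_repr_eq_inv_card
    (hsphere : ∀ᵐ x ∂μ, ‖x‖ = 1) (hinv : ∀ U : E ≃ₗᵢ[𝕜] E, μ.map U = μ)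
    (b : OrthonormalBasis ι 𝕜 E) (i : ι) :
    ∫ x, ‖b.repr x i‖ ^ 2 ∂μ = (Fintype.card ι : ℝ)⁻¹ := by
  have hsum : ∫ x, ∑ j, ‖b.repr x j‖ ^ 2 ∂μ = 1 := by
    rw [integral_congr_ae (g := fun _ => 1), integral_const, probReal_univ, smul_eq_mul, mul_one]
    filter_upwards [hsphere] with x hx
    simp_rw [b.repr_apply_apply, b.sum_sq_norm_inner_right, hx, one_pow]
  rw [integral_finsetSum _ fun j _ => b.integrable_norm_sq_repr hsphere j] at hsum
  simp_rw [b.integral_norm_sq_repr_eq_of_map_eq hinv _ i, Finset.sum_const, Finset.card_univ,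
    nsmul_eq_mul] at hsum
  exact eq_inv_of_mul_eq_one_right hsum

variable [FiniteDimensional 𝕜 E] {T : E →ₗ[𝕜] E}

lemma LinearMap.IsSymmetric.integrable_re_inner_map_self (hT : T.IsSymmetric)
    (hsphere : ∀ᵐ x ∂μ, ‖x‖ = 1) : Integrable (fun x => RCLike.re ⟪x, T x⟫_𝕜) μ := by
  simp_rw [hT.re_inner_map_self_eq_sum rfl]
  exact integrable_finsetSum _ fun i _ =>
    ((hT.eigenvectorBasis rfl).integrable_norm_sq_repr hsphere i).const_mul _

lemma LinearMap.IsSymmetric.integral_re_inner_map_self (hT : T.IsSymmetric)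
    (hsphere : ∀ᵐ x ∂μ, ‖x‖ = 1) (hinv : ∀ U : E ≃ₗᵢ[𝕜] E, μ.map U = μ) :
    ∫ x, RCLike.re ⟪x, T x⟫_𝕜 ∂μ = RCLike.re (T.trace 𝕜 E) / Module.finrank 𝕜 E := by
  simp_rw [hT.re_inner_map_self_eq_sum rfl, hT.re_trace_eq_sum_eigenvalues rfl, Finset.sum_div]
  rw [integral_finsetSum _ fun i _ =>
    ((hT.eigenvectorBasis rfl).integrable_norm_sq_repr hsphere i).const_mul _]
  simp_rw [integral_const_mul,
    (hT.eigenvectorBasis rfl).integral_norm_sq_repr_eq_inv_card hsphere hinv, Fintype.card_fin,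
    div_eq_mul_inv]

end

lemma measure_lt_le_ofReal_integral_div {α : Type*} [MeasurableSpace α] {μ : Measure α}
    [IsFiniteMeasure μ] {f : α → ℝ} (hf_nonneg : 0 ≤ᵐ[μ] f) (hf_int : Integrable f μ) {c : ℝ}
    (hc : 0 < c) : μ {x | c < f x} ≤ ENNReal.ofReal ((∫ x, f x ∂μ) / c) :=
  calc μ {x | c < f x} ≤ μ {x | c ≤ f x} := measure_mono fun x (hx : c < f x) => hx.le
    _ = ENNReal.ofReal (μ.real {x | c ≤ f x}) := (ofReal_measureReal (measure_ne_top μ _)).symm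
    _ ≤ ENNReal.ofReal ((∫ x, f x ∂μ) / c) := by
      gcongr
      rw [le_div_iff₀' hc]
      exact mul_meas_ge_le_integral_of_nonneg hf_nonneg hf_int c

theorem typicality_of_thermal_equilibrium_general
    {E : Type*} [NormedAddCommGroup E] [InnerProductSpace ℂ E] [FiniteDimensional ℂ E]
    [MeasurableSpace E] [BorelSpace E]
    {D : ℕ} (hdim : Module.finrank ℂ E = D)
    (μ : Measure E) [IsProbabilityMeasure μ]
    (hsphere : μ {x : E | ‖x‖ ≠ 1} = 0)
    (hinv : ∀ U : E ≃ₗᵢ[ℂ] E, μ.map U = μ)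
    (P : E →ₗ[ℂ] E) (hsym : P.IsSymmetric)
    (hpos : ∀ x : E, 0 ≤ (inner ℂ x (P x) : ℂ).re)
    (V α γ : ℝ)
    (htdb : (LinearMap.trace ℂ E P).re / (D : ℝ) ≤ Real.exp (-γ * V)) :
    μ {φ : E | Real.exp (-α * V) < (inner ℂ φ (P φ) : ℂ).re}
      ≤ ENNReal.ofReal (Real.exp (-(γ - α) * V)) := by
  have hae : ∀ᵐ x ∂μ, ‖x‖ = 1 := ae_iff.2 hsphere
  have hmean : ∫ φ, (inner ℂ φ (P φ) : ℂ).re ∂μ = (LinearMap.trace ℂ E P).re / D :=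
    hdim ▸ hsym.integral_re_inner_map_self hae hinv
  calc μ {φ : E | Real.exp (-α * V) < (inner ℂ φ (P φ) : ℂ).re}
      ≤ ENNReal.ofReal ((∫ φ, (inner ℂ φ (P φ) : ℂ).re ∂μ) / Real.exp (-α * V)) :=
        measure_lt_le_ofReal_integral_div (ae_of_all _ hpos)
          (hsym.integrable_re_inner_map_self hae) (Real.exp_pos _)
    _ ≤ ENNReal.ofReal (Real.exp (-(γ - α) * V)) := by
      gcongr
      rw [div_le_iff₀ (Real.exp_pos _), ← Real.exp_add, hmean]
      rwa [show -(γ - α) * V + -α * V = -γ * V by ring]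

/-- **Typicality of thermal equilibrium.**  If `P` is a positive semidefinite self-adjoint
operator on a `D`-dimensional complex inner product space satisfying the thermodynamic bound
`(Tr P)/D ≤ exp(−γV)`, then with respect to the uniform (unitarily invariant) probability
measure on the unit sphere, the set of normalized states `φ` with `⟪φ, P φ⟫ > exp(−αV)` has
measure at most `exp(−(γ−α)V)`. -/
theorem typicality_of_thermal_equilibrium
    {E : Type*} [NormedAddCommGroup E] [InnerProductSpace ℂ E] [FiniteDimensional ℂ E]
    [MeasurableSpace E] [BorelSpace E]
    {D : ℕ} (hD : 1 ≤ D) (hdim : Module.finrank ℂ E = D)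
    (μ : Measure E) [IsProbabilityMeasure μ]
    (hsphere : μ {x : E | ‖x‖ ≠ 1} = 0)
    (hinv : ∀ U : E ≃ₗᵢ[ℂ] E, μ.map U = μ)
    (P : E →ₗ[ℂ] E) (hsym : P.IsSymmetric)
    (hpos : ∀ x : E, 0 ≤ (inner ℂ x (P x) : ℂ).re)
    (V α γ : ℝ) (hV : 0 < V) (hα : 0 < α) (hαγ : α < γ)
    (htdb : (LinearMap.trace ℂ E P).re / (D : ℝ) ≤ Real.exp (-γ * V)) :
    μ {φ : E | Real.exp (-α * V) < (inner ℂ φ (P φ) : ℂ).re}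
      ≤ ENNReal.ofReal (Real.exp (-(γ - α) * V)) :=
  typicality_of_thermal_equilibrium_general hdim μ hsphere hinv P hsym hpos V α γ htdb
end

section
/- Let E be a finite-dimensional complex inner product space, J a finite index set, (ψ_j)_{j∈J} an orthonormal family in E, (E_j)_{j∈J} pairwise distinct real numbers, (c_j)_{j∈J} complex coefficients, and P a self-adjoint operator on E. Set φ(t) := ∑_{j∈J} c_j e^{−iE_j t} ψ_j. Then the long-time average of ⟨φ(t), P φ(t)⟩ converges: (1/τ)∫₀^τ ⟨φ(t), P φ(t)⟩ dt → ∑_{j∈J} |c_j|² ⟨ψ_j, P ψ_j⟩ as τ → ∞. -/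
/-!
Expanding `φ` in the `ψ j`, the function `t ↦ ⟪φ t, P (φ t)⟫` is the trigonometric polynomial
`∑ j k, conj (c j) * c k * ⟪ψ j, P (ψ k)⟫ * exp (i (E_j - E_k) t)`. The time average of
`exp (i ω t)` over `[0, τ]` is bounded by `2 / (|ω| τ)` when `ω ≠ 0` and equals `1` when `ω = 0`;
as the `E_j` are distinct, `E_j - E_k` vanishes only on the diagonal `j = k`.
-/

open MeasureTheory Filter Complex ComplexConjugate
open scoped InnerProductSpace

noncomputable def timeAverage {F : Type*} [NormedAddCommGroup F] [NormedSpace ℝ F]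
    (f : ℝ → F) (τ : ℝ) : F :=
  (1 / τ) • ∫ t in (0 : ℝ)..τ, f t

section timeAverage

variable {F : Type*} [NormedAddCommGroup F] [NormedSpace ℝ F]

theorem timeAverage_const [CompleteSpace F] (x : F) {τ : ℝ} (hτ : τ ≠ 0) :
    timeAverage (fun _ => x) τ = x := by
  rw [timeAverage, intervalIntegral.integral_const, smul_smul]
  simp [hτ]

theorem tendsto_timeAverage_const [CompleteSpace F] (x : F) :
    Tendsto (timeAverage fun _ => x) atTop (nhds x) :=
  tendsto_const_nhds.congr' <| (eventually_ne_atTop 0).mono fun _ hτ =>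
    (timeAverage_const x hτ).symm

theorem timeAverage_finsetSum {ι : Type*} (s : Finset ι) {f : ι → ℝ → F} {τ : ℝ}
    (hf : ∀ i ∈ s, IntervalIntegrable (f i) volume 0 τ) :
    timeAverage (fun t => ∑ i ∈ s, f i t) τ = ∑ i ∈ s, timeAverage (f i) τ := by
  rw [timeAverage, intervalIntegral.integral_finsetSum hf, Finset.smul_sum]
  rfl

end timeAverage

theorem timeAverage_const_mul (a : ℂ) (f : ℝ → ℂ) (τ : ℝ) :
    timeAverage (fun t => a * f t) τ = a * timeAverage f τ := by
  simp only [timeAverage, intervalIntegral.integral_const_mul, mul_smul_comm]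

theorem re_timeAverage {f : ℝ → ℂ} {τ : ℝ} (hf : IntervalIntegrable f volume 0 τ) :
    (timeAverage f τ).re = timeAverage (fun t => (f t).re) τ := by
  simpa [timeAverage] using congrArg (1 / τ * ·) (intervalIntegral.intervalIntegral_re hf).symm

theorem norm_integral_exp_ofReal_mul_I_le {ω : ℝ} (hω : ω ≠ 0) (τ : ℝ) :
    ‖∫ t in (0 : ℝ)..τ, cexp (ω * t * I)‖ ≤ 2 / |ω| := by
  have hωI : (ω : ℂ) * I ≠ 0 := by simp [hω]
  simp_rw [mul_right_comm _ _ I]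
  rw [integral_exp_mul_complex hωI, norm_div, norm_mul, norm_I, mul_one, norm_real,
    Real.norm_eq_abs]
  have hunit (s : ℝ) : ‖cexp (ω * I * s)‖ = 1 := by
    rw [mul_right_comm, ← ofReal_mul, norm_exp_ofReal_mul_I]
  gcongr
  calc ‖cexp (ω * I * τ) - cexp (ω * I * (0 : ℝ))‖
      ≤ ‖cexp (ω * I * τ)‖ + ‖cexp (ω * I * (0 : ℝ))‖ := norm_sub_le _ _
    _ = 2 := by rw [hunit, hunit]; norm_num

theorem tendsto_timeAverage_exp_ofReal_mul_I {ω : ℝ} (hω : ω ≠ 0) :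
    Tendsto (timeAverage fun t => cexp (ω * t * I)) atTop (nhds 0) := by
  have hbound :
      ∀ᶠ τ in atTop, ‖timeAverage (fun t => cexp (ω * t * I)) τ‖ ≤ τ⁻¹ * (2 / |ω|) := by
    filter_upwards [eventually_gt_atTop 0] with τ hτ
    rw [timeAverage, norm_smul, one_div, norm_inv, Real.norm_of_nonneg hτ.le]
    gcongr
    exact norm_integral_exp_ofReal_mul_I_le hω τ
  exact squeeze_zero_norm' hbound (by simpa using tendsto_inv_atTop_zero.mul_const (2 / |ω|))

theorem tendsto_timeAverage_sum_exp {ι : Type*} [Fintype ι] (a : ι → ℂ) (ω : ι → ℝ) :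
    Tendsto (timeAverage fun t => ∑ i, a i * cexp (ω i * t * I)) atTop
      (nhds (∑ i, if ω i = 0 then a i else 0)) := by
  have hcont : ∀ i, Continuous fun t : ℝ => a i * cexp (ω i * t * I) := fun i => by fun_prop
  refine (tendsto_finsetSum _ fun i _ => ?_).congr fun τ =>
    (timeAverage_finsetSum _ fun i _ => (hcont i).intervalIntegrable 0 τ).symm
  split_ifs with hω
  · simpa [hω] using tendsto_timeAverage_const (a i)
  · have h := (tendsto_timeAverage_exp_ofReal_mul_I hω).const_mul (a i)
    rw [mul_zero] at h
    exact h.congr fun τ => (timeAverage_const_mul _ _ τ).symm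

theorem inner_sum_smul_map_sum_smul {E : Type*} [NormedAddCommGroup E] [InnerProductSpace ℂ E]
    {ι : Type*} (s : Finset ι) (a b : ι → ℂ) (v : ι → E) (P : E →ₗ[ℂ] E) :
    ⟪∑ j ∈ s, a j • v j, P (∑ k ∈ s, b k • v k)⟫_ℂ =
      ∑ j ∈ s, ∑ k ∈ s, conj (a j) * b k * ⟪v j, P (v k)⟫_ℂ := by
  rw [map_sum, sum_inner]
  refine Finset.sum_congr rfl fun j _ => ?_
  simp only [map_smul, inner_smul_left, inner_sum, inner_smul_right]
  exact Finset.sum_congr rfl fun k _ => by ring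

theorem conj_exp_neg_I_mul_exp_neg_I (x y t : ℝ) :
    conj (cexp (-I * x * t)) * cexp (-I * y * t) = cexp ((x - y : ℝ) * t * I) := by
  rw [← exp_conj, ← exp_add]
  congr 1
  simp only [neg_mul, map_neg, map_mul, conj_I, conj_ofReal, neg_neg, ofReal_sub]
  ring

theorem long_time_average_nondegenerate_general
    {E : Type*} [NormedAddCommGroup E] [InnerProductSpace ℂ E]
    {J : Type*} [Fintype J]
    (ψ : J → E)
    (Ej : J → ℝ) (hEj : Function.Injective Ej)
    (c : J → ℂ) (P : E →ₗ[ℂ] E)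
    (φ : ℝ → E)
    (hφ : ∀ t : ℝ, φ t = ∑ j, (c j * Complex.exp ((-Complex.I) * (Ej j : ℂ) * (t : ℂ))) • ψ j) :
    Tendsto (fun τ : ℝ => (1 / τ) * ∫ t in (0:ℝ)..τ, (inner ℂ (φ t) (P (φ t)) : ℂ).re)
      atTop (nhds (∑ j, ‖c j‖ ^ 2 * (inner ℂ (ψ j) (P (ψ j)) : ℂ).re)) := by
  set A : J × J → ℂ := fun p => conj (c p.1) * c p.2 * ⟪ψ p.1, P (ψ p.2)⟫_ℂ
  have hexpand (t : ℝ) :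
      ⟪φ t, P (φ t)⟫_ℂ = ∑ p : J × J, A p * cexp ((Ej p.1 - Ej p.2 : ℝ) * t * I) := by
    rw [hφ, inner_sum_smul_map_sum_smul, Fintype.sum_prod_type]
    refine Finset.sum_congr rfl fun j _ => Finset.sum_congr rfl fun k _ => ?_
    rw [← conj_exp_neg_I_mul_exp_neg_I, map_mul]
    ring
  have hdiag : ∑ p : J × J, (if Ej p.1 - Ej p.2 = 0 then A p else 0) =
      ∑ j, ((‖c j‖ ^ 2 : ℝ) : ℂ) * ⟪ψ j, P (ψ j)⟫_ℂ := by
    classical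
    rw [Fintype.sum_prod_type]
    refine Finset.sum_congr rfl fun j _ => ?_
    simp only [A, sub_eq_zero, hEj.eq_iff, Finset.sum_ite_eq, Finset.mem_univ, if_true]
    rw [conj_mul', ofReal_pow]
  have hcont : Continuous fun t => ⟪φ t, P (φ t)⟫_ℂ := by
    simp_rw [hexpand]
    fun_prop
  have hlim := (continuous_re.tendsto _).comp
    (tendsto_timeAverage_sum_exp A fun p => Ej p.1 - Ej p.2)
  rw [hdiag, re_sum] at hlim
  simp_rw [re_ofReal_mul] at hlim
  refine hlim.congr fun τ => ?_
  simp_rw [Function.comp_apply, ← hexpand]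
  exact re_timeAverage (hcont.intervalIntegrable 0 τ)

/-- For `φ(t) = ∑_j c_j e^{−iE_j t} ψ_j` with `(ψ_j)` orthonormal and the `E_j` pairwise
distinct reals, the long-time average of `⟪φ(t), P φ(t)⟫` converges to
`∑_j |c_j|² ⟪ψ_j, P ψ_j⟫` for any self-adjoint operator `P`. -/
theorem long_time_average_nondegenerate
    {E : Type*} [NormedAddCommGroup E] [InnerProductSpace ℂ E] [FiniteDimensional ℂ E]
    {J : Type*} [Fintype J]
    (ψ : J → E) (hψ : Orthonormal ℂ ψ)
    (Ej : J → ℝ) (hEj : Function.Injective Ej)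
    (c : J → ℂ) (P : E →ₗ[ℂ] E) (hP : P.IsSymmetric)
    (φ : ℝ → E)
    (hφ : ∀ t : ℝ, φ t = ∑ j, (c j * Complex.exp ((-Complex.I) * (Ej j : ℂ) * (t : ℂ))) • ψ j) :
    Tendsto (fun τ : ℝ => (1 / τ) * ∫ t in (0:ℝ)..τ, (inner ℂ (φ t) (P (φ t)) : ℂ).re)
      atTop (nhds (∑ j, ‖c j‖ ^ 2 * (inner ℂ (ψ j) (P (ψ j)) : ℂ).re)) :=
  long_time_average_nondegenerate_general ψ Ej hEj c P φ hφ
end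

section
/- Let D ≥ 1, let μ be the uniform probability measure on the unit sphere of ℂ^D, and let η > 0 and V > 0. Then μ{ φ = (c_1,…,c_D) on the unit sphere : ∑_{j=1}^{D} |c_j|⁴ ≥ exp(ηV)/D } ≤ 2·exp(−ηV); that is, a randomly chosen normalized state has effective dimension D_eff := (∑_j |c_j|⁴)^{−1} ≥ exp(−ηV)·D with probability at least 1 − 2·exp(−ηV). -/
/-!
The mean of `∑ j, |c_j|⁴` is exactly `2 / (D + 1)`, so Markov's inequality gives the bound.
Write `A_i = E|c_i|⁴` and `B_ik = E(|c_i|² |c_k|²)`. For `i ≠ k`, invariance under the unitary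
that replaces `c_i` by `(c_i + z c_k)/√2`, averaged over `z ∈ {1, i, -1, -i}`, gives
`3 A_i = A_k + 4 B_ik`; as `B` is symmetric this forces `A_i = A_k` and `B_ik = A_i / 2`.
On the sphere `(∑ j, |c_j|²)² = 1`, hence `1 = ∑ i k, B_ik = (D + 1)/2 · ∑ i, A_i`.
-/

open MeasureTheory Complex Finset

section Mixing

variable {ι : Type*} [DecidableEq ι]

noncomputable def coordMixing (i k : ι) (z : ℂ) : EuclideanSpace ℂ ι →ₗ[ℂ] EuclideanSpace ℂ ι where
  toFun φ := WithLp.toLp 2 fun l =>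
    if l = i then (φ i + z * φ k) / √2 else if l = k then (φ i - z * φ k) / √2 else φ l
  map_add' φ ψ := by
    ext l
    simp only [PiLp.add_apply]
    split_ifs <;> ring
  map_smul' c φ := by
    ext l
    simp only [PiLp.smul_apply, smul_eq_mul, RingHom.id_apply]
    split_ifs <;> ring

lemma coordMixing_apply_left (i k : ι) (z : ℂ) (φ : EuclideanSpace ℂ ι) :
    coordMixing i k z φ i = (φ i + z * φ k) / √2 :=
  if_pos rfl

lemma norm_div_sqrt_two_sq (w : ℂ) : ‖w / √2‖ ^ 2 = ‖w‖ ^ 2 / 2 := by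
  rw [norm_div, div_pow, norm_real, Real.norm_of_nonneg (Real.sqrt_nonneg 2),
    Real.sq_sqrt zero_le_two]

variable [Fintype ι]

lemma norm_coordMixing {i k : ι} (hik : i ≠ k) {z : ℂ} (hz : ‖z‖ = 1) (φ : EuclideanSpace ℂ ι) :
    ‖coordMixing i k z φ‖ = ‖φ‖ := by
  have hpair : ‖coordMixing i k z φ i‖ ^ 2 + ‖coordMixing i k z φ k‖ ^ 2
      = ‖φ i‖ ^ 2 + ‖φ k‖ ^ 2 := by
    have hk : coordMixing i k z φ k = (φ i - z * φ k) / √2 :=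
      (if_neg hik.symm).trans (if_pos rfl)
    rw [coordMixing_apply_left, hk, norm_div_sqrt_two_sq, norm_div_sqrt_two_sq, ← add_div,
      parallelogram_law_with_norm ℂ, norm_mul, hz, one_mul]
    ring
  have hsum : ∑ l, (‖coordMixing i k z φ l‖ ^ 2 - ‖φ l‖ ^ 2) = 0 := by
    rw [Fintype.sum_eq_add i k hik fun l ⟨hli, hlk⟩ => by simp [coordMixing, hli, hlk]]
    linarith
  rw [sum_sub_distrib, sub_eq_zero] at hsum
  rw [EuclideanSpace.norm_eq, EuclideanSpace.norm_eq, hsum]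

noncomputable def coordMixingEquiv {i k : ι} (hik : i ≠ k) {z : ℂ} (hz : ‖z‖ = 1) :
    EuclideanSpace ℂ ι ≃ₗᵢ[ℂ] EuclideanSpace ℂ ι :=
  LinearIsometry.toLinearIsometryEquiv ⟨coordMixing i k z, norm_coordMixing hik hz⟩ rfl

end Mixing

lemma sum_range_four_norm_add_I_pow_mul_div_sqrt_two (u v : ℂ) :
    ∑ m ∈ range 4, ‖(u + I ^ m * v) / √2‖ ^ 4 = ‖u‖ ^ 4 + ‖v‖ ^ 4 + 4 * (‖u‖ ^ 2 * ‖v‖ ^ 2) := by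
  have hquot : ∀ w : ℂ, ‖w / √2‖ ^ 4 = (‖w‖ ^ 2) ^ 2 / 4 := fun w => by
    rw [show ‖w / √2‖ ^ 4 = (‖w / √2‖ ^ 2) ^ 2 by ring, norm_div_sqrt_two_sq]
    ring
  simp only [sum_range_succ, range_zero, sum_empty, hquot, pow_zero, pow_one, I_sq, I_pow_three]
  rw [show ‖u‖ ^ 4 = (‖u‖ ^ 2) ^ 2 by ring, show ‖v‖ ^ 4 = (‖v‖ ^ 2) ^ 2 by ring]
  simp only [Complex.sq_norm, normSq_apply, add_re, add_im, mul_re, mul_im, one_re, one_im,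
    neg_re, neg_im, I_re, I_im]
  ring

section Moments

variable {ι : Type*} [Fintype ι]
  [MeasurableSpace (EuclideanSpace ℂ ι)] [BorelSpace (EuclideanSpace ℂ ι)]
  {μ : Measure (EuclideanSpace ℂ ι)}

lemma integrable_norm_sq_mul_norm_sq [IsFiniteMeasure μ] (hμ : ∀ᵐ φ ∂μ, ‖φ‖ = 1) (i k : ι) :
    Integrable (fun φ : EuclideanSpace ℂ ι => ‖φ i‖ ^ 2 * ‖φ k‖ ^ 2) μ := by
  refine Integrable.of_bound (by fun_prop) 1 ?_
  filter_upwards [hμ] with φ hφ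
  have hi := hφ ▸ PiLp.norm_apply_le φ i
  have hk := hφ ▸ PiLp.norm_apply_le φ k
  rw [Real.norm_of_nonneg (by positivity)]
  exact mul_le_one₀ (pow_le_one₀ (norm_nonneg _) hi) (by positivity)
    (pow_le_one₀ (norm_nonneg _) hk)

lemma integrable_norm_pow_four [IsFiniteMeasure μ] (hμ : ∀ᵐ φ ∂μ, ‖φ‖ = 1) (i : ι) :
    Integrable (fun φ : EuclideanSpace ℂ ι => ‖φ i‖ ^ 4) μ := by
  simpa only [← pow_add] using integrable_norm_sq_mul_norm_sq hμ i i

variable [DecidableEq ι]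

lemma three_mul_integral_norm_pow_four [IsFiniteMeasure μ] (hμ : ∀ᵐ φ ∂μ, ‖φ‖ = 1)
    (hinv : ∀ U : EuclideanSpace ℂ ι ≃ₗᵢ[ℂ] EuclideanSpace ℂ ι, μ.map U = μ)
    {i k : ι} (hik : i ≠ k) :
    3 * ∫ φ, ‖φ i‖ ^ 4 ∂μ = ∫ φ, ‖φ k‖ ^ 4 ∂μ + 4 * ∫ φ, ‖φ i‖ ^ 2 * ‖φ k‖ ^ 2 ∂μ := by
  have hmix : ∀ m : ℕ, Integrable (fun φ : EuclideanSpace ℂ ι => ‖(φ i + I ^ m * φ k) / √2‖ ^ 4) μ ∧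
      ∫ φ, ‖(φ i + I ^ m * φ k) / √2‖ ^ 4 ∂μ = ∫ φ, ‖φ i‖ ^ 4 ∂μ := fun m => by
    let U := coordMixingEquiv hik (z := I ^ m) (by simp)
    have hU : MeasurePreserving U μ μ := ⟨U.continuous.measurable, hinv U⟩
    have hUφ : ∀ φ, (U φ) i = (φ i + I ^ m * φ k) / √2 := coordMixing_apply_left i k _
    simp only [← hUφ]
    exact ⟨(hU.integrable_comp_emb U.toHomeomorph.measurableEmbedding
      (g := fun φ => ‖φ i‖ ^ 4)).2 (integrable_norm_pow_four hμ i),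
      hU.integral_comp U.toHomeomorph.measurableEmbedding fun φ => ‖φ i‖ ^ 4⟩
  have hsum : 4 * ∫ φ, ‖φ i‖ ^ 4 ∂μ
      = ∫ φ, ‖φ i‖ ^ 4 + ‖φ k‖ ^ 4 + 4 * (‖φ i‖ ^ 2 * ‖φ k‖ ^ 2) ∂μ := by
    simp only [← sum_range_four_norm_add_I_pow_mul_div_sqrt_two]
    rw [integral_finsetSum _ fun m _ => (hmix m).1, sum_congr rfl fun m _ => (hmix m).2]
    simp
  rw [integral_add (f := fun φ => ‖φ i‖ ^ 4 + ‖φ k‖ ^ 4)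
    ((integrable_norm_pow_four hμ i).add (integrable_norm_pow_four hμ k))
    ((integrable_norm_sq_mul_norm_sq hμ i k).const_mul 4), integral_add
    (integrable_norm_pow_four hμ i) (integrable_norm_pow_four hμ k), integral_const_mul] at hsum
  linarith

lemma integral_norm_sq_mul_norm_sq [IsFiniteMeasure μ] (hμ : ∀ᵐ φ ∂μ, ‖φ‖ = 1)
    (hinv : ∀ U : EuclideanSpace ℂ ι ≃ₗᵢ[ℂ] EuclideanSpace ℂ ι, μ.map U = μ) (i k : ι) :
    ∫ φ, ‖φ i‖ ^ 2 * ‖φ k‖ ^ 2 ∂μ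
      = (∫ φ, ‖φ i‖ ^ 4 ∂μ) / 2 + if i = k then (∫ φ, ‖φ i‖ ^ 4 ∂μ) / 2 else 0 := by
  split_ifs with hik
  · subst hik
    rw [add_halves]
    exact integral_congr_ae (ae_of_all _ fun φ => by ring)
  · have hik' := three_mul_integral_norm_pow_four hμ hinv hik
    have hki := three_mul_integral_norm_pow_four hμ hinv (Ne.symm hik)
    have hcomm : ∫ φ, ‖φ k‖ ^ 2 * ‖φ i‖ ^ 2 ∂μ = ∫ φ, ‖φ i‖ ^ 2 * ‖φ k‖ ^ 2 ∂μ :=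
      integral_congr_ae (ae_of_all _ fun φ => mul_comm _ _)
    linarith

theorem integral_sum_norm_pow_four [IsProbabilityMeasure μ] (hμ : ∀ᵐ φ ∂μ, ‖φ‖ = 1)
    (hinv : ∀ U : EuclideanSpace ℂ ι ≃ₗᵢ[ℂ] EuclideanSpace ℂ ι, μ.map U = μ) :
    ∫ φ, ∑ i, ‖φ i‖ ^ 4 ∂μ = 2 / (Fintype.card ι + 1) := by
  have hone : ∫ φ, ∑ i, ∑ k, ‖φ i‖ ^ 2 * ‖φ k‖ ^ 2 ∂μ = 1 := by
    rw [integral_congr_ae (g := fun _ => 1), integral_const, probReal_univ, one_smul]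
    filter_upwards [hμ] with φ hφ
    rw [← sum_mul_sum, ← EuclideanSpace.norm_sq_eq, hφ]
    norm_num
  simp only [integral_finsetSum _ fun i _ => integrable_finsetSum _ fun k _ =>
    integrable_norm_sq_mul_norm_sq hμ i k, integral_finsetSum _ fun k _ =>
    integrable_norm_sq_mul_norm_sq hμ _ k, integral_norm_sq_mul_norm_sq hμ hinv,
    sum_add_distrib, sum_ite_eq, mem_univ, if_true, sum_const, card_univ, nsmul_eq_mul] at hone
  rw [integral_finsetSum _ fun i _ => integrable_norm_pow_four hμ i]
  simp only [← sum_div, ← mul_sum] at hone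
  field_simp
  linear_combination 2 * hone

end Moments

theorem effective_dimension_typically_large_general
    {D : ℕ} (hD : 1 ≤ D)
    [MeasurableSpace (EuclideanSpace ℂ (Fin D))] [BorelSpace (EuclideanSpace ℂ (Fin D))]
    (μ : Measure (EuclideanSpace ℂ (Fin D))) [IsProbabilityMeasure μ]
    (hsphere : μ {x : EuclideanSpace ℂ (Fin D) | ‖x‖ ≠ 1} = 0)
    (hinv : ∀ U : EuclideanSpace ℂ (Fin D) ≃ₗᵢ[ℂ] EuclideanSpace ℂ (Fin D), μ.map U = μ)
    (η V : ℝ) :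
    μ {φ : EuclideanSpace ℂ (Fin D) | Real.exp (η * V) / (D : ℝ) ≤ ∑ j, ‖φ j‖ ^ 4}
      ≤ ENNReal.ofReal (2 * Real.exp (-η * V)) := by
  have hμ : ∀ᵐ φ ∂μ, ‖φ‖ = 1 := ae_iff.2 hsphere
  have hmarkov := mul_meas_ge_le_integral_of_nonneg (ae_of_all _ fun φ => by positivity)
    (integrable_finsetSum univ fun i _ => integrable_norm_pow_four hμ i) (Real.exp (η * V) / D)
  rw [integral_sum_norm_pow_four hμ hinv, Fintype.card_fin] at hmarkov
  rw [← ofReal_measureReal]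
  refine ENNReal.ofReal_le_ofReal ?_
  calc _ ≤ 2 / (D + 1) / (Real.exp (η * V) / D) := (le_div_iff₀' (by positivity)).2 hmarkov
    _ = 2 * Real.exp (-η * V) * (D / (D + 1)) := by
      rw [neg_mul, Real.exp_neg]
      field_simp
    _ ≤ 2 * Real.exp (-η * V) :=
      mul_le_of_le_one_right (by positivity) (div_le_one_of_le₀ (by linarith) (by positivity))

/-- With respect to the uniform (unitarily invariant) probability measure `μ` on the unit
sphere of `ℂ^D`, the set of states `φ = (c_1,…,c_D)` with `∑_j |c_j|⁴ ≥ exp(ηV)/D` has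
measure at most `2·exp(−ηV)`; equivalently, a random normalized state has effective dimension
`(∑_j |c_j|⁴)⁻¹ ≥ exp(−ηV)·D` with probability at least `1 − 2·exp(−ηV)`. -/
theorem effective_dimension_typically_large
    {D : ℕ} (hD : 1 ≤ D)
    [MeasurableSpace (EuclideanSpace ℂ (Fin D))] [BorelSpace (EuclideanSpace ℂ (Fin D))]
    (μ : Measure (EuclideanSpace ℂ (Fin D))) [IsProbabilityMeasure μ]
    (hsphere : μ {x : EuclideanSpace ℂ (Fin D) | ‖x‖ ≠ 1} = 0)
    (hinv : ∀ U : EuclideanSpace ℂ (Fin D) ≃ₗᵢ[ℂ] EuclideanSpace ℂ (Fin D), μ.map U = μ)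
    (η V : ℝ) (hη : 0 < η) (hV : 0 < V) :
    μ {φ : EuclideanSpace ℂ (Fin D) | Real.exp (η * V) / (D : ℝ) ≤ ∑ j, ‖φ j‖ ^ 4}
      ≤ ENNReal.ofReal (2 * Real.exp (-η * V)) :=
  effective_dimension_typically_large_general hD μ hsphere hinv η V
end

section
/- (Sufficient condition for a moderate energy distribution.) Let E be a finite-dimensional complex inner product space, (ψ_j)_{j∈J} an orthonormal family in E with |J| = D ≥ 1, and (ξ_i)_{i=1,…,N} an orthonormal family contained in the span of (ψ_j), with expansions ξ_i = ∑_{j∈J} g_{i,j} ψ_j. Let V > 0, ε > 0, η > ε, and assume that for every i: ∑_{j∈J} |g_{i,j}|⁴ ≤ exp((η−ε)V)/D. Choose α = (α_1,…,α_N) according to the uniform probability measure on the unit sphere of ℂ^N and set φ₀ := ∑_{i=1}^N α_i ξ_i, so that c_j := ⟨ψ_j, φ₀⟩ = ∑_i α_i g_{i,j}. Then with probability at least 1 − 2·exp(−εV) one has ∑_{j∈J} |c_j|⁴ ≤ exp(ηV)/D, i.e. the effective dimension of φ₀ satisfies D_eff := (∑_j |c_j|⁴)^{−1} ≥ exp(−ηV)·D.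 -/
/-!
Write `∑ i, a i * g i j = ⟪w_j, a⟫` with `w_j = (conj (g i j))_i`. Unitary invariance makes the
law of `⟪w, a⟫` depend only on `‖w‖`, so `E |⟪w, a⟫|⁴ = ‖w‖⁴ E |a₁|⁴`. Averaging `|a₁ + c a₂|⁴`
over the phases `c = ±1, ±i` gives `E |a₁|²|a₂|² = E |a₁|⁴ / 2`, and expanding
`E (∑ |a_i|²)² = 1` then yields `E |a₁|⁴ = 2 / (N (N + 1))`. With Cauchy–Schwarz
`‖w_j‖⁴ ≤ N ∑_i |g i j|⁴` this bounds `E ∑_j |c_j|⁴` by `2 exp((η - ε) V) / D`, and Markov's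
inequality at level `exp(η V) / D` concludes.
-/

open MeasureTheory
open scoped InnerProductSpace

theorem Complex.norm_pow_four_polarization (X Y : ℂ) :
    ‖X + Y‖ ^ 4 + ‖X - Y‖ ^ 4 + ‖X + I * Y‖ ^ 4 + ‖X - I * Y‖ ^ 4 =
      4 * (‖X‖ ^ 4 + ‖Y‖ ^ 4) + 16 * (‖X‖ ^ 2 * ‖Y‖ ^ 2) := by
  have h4 : ∀ z : ℂ, ‖z‖ ^ 4 = normSq z ^ 2 := fun z => by rw [← Complex.sq_norm]; ring
  simp only [h4, Complex.sq_norm, normSq_apply, add_re, add_im, sub_re, sub_im, mul_re, mul_im,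
    I_re, I_im]
  ring

theorem Continuous.integrable_of_ae_norm_eq_one {X F : Type*} [NormedAddCommGroup X]
    [ProperSpace X] [MeasurableSpace X] [OpensMeasurableSpace X] [NormedAddCommGroup F]
    {μ : Measure X} [IsFiniteMeasure μ] (hμ1 : ∀ᵐ a ∂μ, ‖a‖ = 1) {f : X → F}
    (hf : Continuous f) : Integrable f μ := by
  rw [← Measure.restrict_eq_self_of_ae_mem (μ := μ) (s := Metric.sphere 0 1) (by simpa using hμ1)]
  exact hf.continuousOn.integrableOn_compact (isCompact_sphere 0 1)

theorem measure_lt_le_ofReal_div_of_integral_le {α : Type*} [MeasurableSpace α] {μ : Measure α}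
    [IsFiniteMeasure μ] {f : α → ℝ} (hf₀ : 0 ≤ᵐ[μ] f) (hf : Integrable f μ) {C t : ℝ}
    (hC : ∫ x, f x ∂μ ≤ C) (ht : 0 < t) :
    μ {x | t < f x} ≤ ENNReal.ofReal (C / t) := by
  have hmarkov : t * μ.real {x | t ≤ f x} ≤ C :=
    (mul_meas_ge_le_integral_of_nonneg hf₀ hf t).trans hC
  calc μ {x | t < f x} ≤ μ {x | t ≤ f x} := measure_mono fun x (hx : t < f x) => hx.le
    _ = ENNReal.ofReal (μ.real {x | t ≤ f x}) := (ofReal_measureReal (measure_ne_top μ _)).symm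
    _ ≤ ENNReal.ofReal (C / t) :=
        ENNReal.ofReal_le_ofReal ((le_div_iff₀ ht).mpr (by linarith))

section UnitarilyInvariant

variable {𝕜 E : Type*} [RCLike 𝕜] [NormedAddCommGroup E] [InnerProductSpace 𝕜 E]
  [FiniteDimensional 𝕜 E]

theorem exists_linearIsometryEquiv_apply_eq {x y : E} (hx : ‖x‖ = 1) (hy : ‖y‖ = 1) :
    ∃ U : E ≃ₗᵢ[𝕜] E, U x = y := by
  classical
  obtain ⟨u, b, hxu, hb⟩ := Orthonormal.exists_orthonormalBasis_extension (𝕜 := 𝕜)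
    (v := {x}) (orthonormal_subsingleton_iff.mpr fun ⟨_, rfl⟩ => hx)
  set i : u := ⟨x, hxu rfl⟩
  obtain ⟨b', hb'⟩ := Orthonormal.exists_orthonormalBasis_extension_of_card_eq (𝕜 := 𝕜)
    (Module.finrank_eq_card_basis b.toBasis) (v := fun _ => y) (s := {i})
    (orthonormal_subsingleton_iff.mpr fun _ => hy)
  refine ⟨b.repr.trans b'.repr.symm, ?_⟩
  have hbi : b i = x := by rw [hb]
  simp [← hbi, hb' i rfl]

variable [MeasurableSpace E] [BorelSpace E] {μ : Measure E}

theorem integral_comp_inner_eq_of_norm_eq_one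
    (hμ : ∀ U : E ≃ₗᵢ[𝕜] E, μ.map U = μ) {x y : E} (hx : ‖x‖ = 1) (hy : ‖y‖ = 1)
    {F : Type*} [NormedAddCommGroup F] [NormedSpace ℝ F] (G : 𝕜 → F) :
    ∫ a, G ⟪x, a⟫_𝕜 ∂μ = ∫ a, G ⟪y, a⟫_𝕜 ∂μ := by
  obtain ⟨U, hU⟩ := exists_linearIsometryEquiv_apply_eq (𝕜 := 𝕜) hy hx
  have hU_pres : MeasurePreserving U.toHomeomorph.toMeasurableEquiv μ μ :=
    ⟨U.continuous.measurable, hμ U⟩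
  rw [← hU_pres.integral_comp']
  simp [← hU]

theorem integral_norm_inner_pow_eq (hμ : ∀ U : E ≃ₗᵢ[𝕜] E, μ.map U = μ) {e : E} (he : ‖e‖ = 1)
    (w : E) (p : ℕ) :
    ∫ a, ‖⟪w, a⟫_𝕜‖ ^ p ∂μ = ‖w‖ ^ p * ∫ a, ‖⟪e, a⟫_𝕜‖ ^ p ∂μ := by
  obtain ⟨x, hx, hwx⟩ : ∃ x : E, ‖x‖ = 1 ∧ w = (‖w‖ : 𝕜) • x := by
    rcases eq_or_ne w 0 with rfl | hw
    · exact ⟨e, he, by simp⟩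
    · exact ⟨(‖w‖⁻¹ : 𝕜) • w, norm_smul_inv_norm hw, by simp [smul_smul, hw]⟩
  calc ∫ a, ‖⟪w, a⟫_𝕜‖ ^ p ∂μ = ∫ a, ‖w‖ ^ p * ‖⟪x, a⟫_𝕜‖ ^ p ∂μ := by
        congr with a
        rw [hwx, inner_smul_left, norm_mul, mul_pow]
        simp [norm_smul, hx]
    _ = ‖w‖ ^ p * ∫ a, ‖⟪e, a⟫_𝕜‖ ^ p ∂μ := by
        rw [integral_const_mul, integral_comp_inner_eq_of_norm_eq_one hμ hx he (‖·‖ ^ p)]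

end UnitarilyInvariant

section UniformOnSphere

variable {E : Type*} [NormedAddCommGroup E] [InnerProductSpace ℂ E] [FiniteDimensional ℂ E]
  [MeasurableSpace E] [BorelSpace E] {μ : Measure E}

theorem integral_norm_inner_sq_mul_norm_inner_sq [IsFiniteMeasure μ]
    (hμ : ∀ U : E ≃ₗᵢ[ℂ] E, μ.map U = μ) (hμ1 : ∀ᵐ a ∂μ, ‖a‖ = 1)
    {x y : E} (hx : ‖x‖ = 1) (hy : ‖y‖ = 1) (hxy : ⟪x, y⟫_ℂ = 0) :
    ∫ a, ‖⟪x, a⟫_ℂ‖ ^ 2 * ‖⟪y, a⟫_ℂ‖ ^ 2 ∂μ = (∫ a, ‖⟪x, a⟫_ℂ‖ ^ 4 ∂μ) / 2 := by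
  have hy4 : ∫ a, ‖⟪y, a⟫_ℂ‖ ^ 4 ∂μ = ∫ a, ‖⟪x, a⟫_ℂ‖ ^ 4 ∂μ := by
    rw [integral_norm_inner_pow_eq hμ hx, hy, one_pow, one_mul]
  have hphase : ∀ d : ℂ, ‖d‖ = 1 →
      ∫ a, ‖⟪x, a⟫_ℂ + d * ⟪y, a⟫_ℂ‖ ^ 4 ∂μ = 4 * ∫ a, ‖⟪x, a⟫_ℂ‖ ^ 4 ∂μ := by
    intro d hd
    have hsq : ‖x + (starRingEnd ℂ d) • y‖ ^ 2 = 2 := by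
      rw [@norm_add_sq ℂ, inner_smul_right, hxy, mul_zero, map_zero, norm_smul,
        Complex.norm_conj, hd, hx, hy]
      norm_num
    have h := integral_norm_inner_pow_eq hμ hx (x + (starRingEnd ℂ d) • y) 4
    simp only [inner_add_left, inner_smul_left, Complex.conj_conj] at h
    rw [h, show ‖x + (starRingEnd ℂ d) • y‖ ^ 4 = (‖x + (starRingEnd ℂ d) • y‖ ^ 2) ^ 2 by ring,
      hsq]
    norm_num
  have hpol := integral_congr_ae (μ := μ) (Filter.Eventually.of_forall fun a =>
    Complex.norm_pow_four_polarization ⟪x, a⟫_ℂ ⟪y, a⟫_ℂ)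
  rw [integral_add, integral_add, integral_add, integral_add, integral_const_mul,
    integral_const_mul, integral_add, hy4] at hpol
  · have h1 := hphase 1 (by simp)
    have h2 := hphase (-1) (by simp)
    have h3 := hphase Complex.I (by simp)
    have h4 := hphase (-Complex.I) (by simp)
    simp only [one_mul, neg_mul, ← sub_eq_add_neg] at h1 h2 h4
    linarith
  all_goals exact Continuous.integrable_of_ae_norm_eq_one hμ1 (by fun_prop)

variable [IsProbabilityMeasure μ]

theorem integral_norm_inner_pow_four_of_norm_eq_one
    (hμ : ∀ U : E ≃ₗᵢ[ℂ] E, μ.map U = μ) (hμ1 : ∀ᵐ a ∂μ, ‖a‖ = 1) {e : E} (he : ‖e‖ = 1) :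
    ∫ a, ‖⟪e, a⟫_ℂ‖ ^ 4 ∂μ = 2 / (Module.finrank ℂ E * (Module.finrank ℂ E + 1)) := by
  classical
  set n := Module.finrank ℂ E
  set b := stdOrthonormalBasis ℂ E
  set q := ∫ a, ‖⟪e, a⟫_ℂ‖ ^ 4 ∂μ
  have hint : ∀ i k, Integrable (fun a => ‖⟪b i, a⟫_ℂ‖ ^ 2 * ‖⟪b k, a⟫_ℂ‖ ^ 2) μ :=
    fun i k => Continuous.integrable_of_ae_norm_eq_one hμ1 (by fun_prop)
  have hpair : ∀ i k, ∫ a, ‖⟪b i, a⟫_ℂ‖ ^ 2 * ‖⟪b k, a⟫_ℂ‖ ^ 2 ∂μ =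
      q / 2 + if i = k then q / 2 else 0 := by
    intro i k
    have hb4 : ∫ a, ‖⟪b i, a⟫_ℂ‖ ^ 4 ∂μ = q := by
      rw [integral_norm_inner_pow_eq hμ he, b.orthonormal.1 i, one_pow, one_mul]
    split_ifs with hik
    · simp only [hik, ← pow_add] at hb4 ⊢
      rw [hb4]
      ring
    · rw [integral_norm_inner_sq_mul_norm_inner_sq hμ hμ1 (b.orthonormal.1 i)
        (b.orthonormal.1 k) (b.orthonormal.2 hik), hb4]
      ring
  have hone : 1 = ∑ i, ∑ k, ∫ a, ‖⟪b i, a⟫_ℂ‖ ^ 2 * ‖⟪b k, a⟫_ℂ‖ ^ 2 ∂μ :=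
    calc (1 : ℝ) = ∫ a, (∑ i, ‖⟪b i, a⟫_ℂ‖ ^ 2) ^ 2 ∂μ := by
          rw [integral_congr_ae (g := fun _ => (1 : ℝ))]
          · simp
          filter_upwards [hμ1] with a ha
          rw [b.sum_sq_norm_inner_right, ha]
          norm_num
      _ = ∫ a, ∑ i, ∑ k, ‖⟪b i, a⟫_ℂ‖ ^ 2 * ‖⟪b k, a⟫_ℂ‖ ^ 2 ∂μ := by
          simp only [sq (∑ i, _), Finset.sum_mul_sum]
      _ = ∑ i, ∑ k, ∫ a, ‖⟪b i, a⟫_ℂ‖ ^ 2 * ‖⟪b k, a⟫_ℂ‖ ^ 2 ∂μ := by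
          rw [integral_finsetSum _ fun i _ => integrable_finsetSum _ fun k _ => hint i k]
          exact Finset.sum_congr rfl fun i _ => integral_finsetSum _ fun k _ => hint i k
  simp only [hpair, Finset.sum_add_distrib, Finset.sum_ite_eq, Finset.mem_univ, if_true,
    Finset.sum_const, Finset.card_univ, Fintype.card_fin, nsmul_eq_mul] at hone
  have hq : q * (n * (n + 1)) = 2 := by linear_combination -2 * hone
  exact eq_div_of_mul_eq (right_ne_zero_of_mul (hq ▸ two_ne_zero)) hq

theorem integral_norm_inner_pow_four (hμ : ∀ U : E ≃ₗᵢ[ℂ] E, μ.map U = μ)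
    (hμ1 : ∀ᵐ a ∂μ, ‖a‖ = 1) (w : E) :
    ∫ a, ‖⟪w, a⟫_ℂ‖ ^ 4 ∂μ = 2 * ‖w‖ ^ 4 / (Module.finrank ℂ E * (Module.finrank ℂ E + 1)) := by
  obtain ⟨e, he⟩ := hμ1.exists
  rw [integral_norm_inner_pow_eq hμ he, integral_norm_inner_pow_four_of_norm_eq_one hμ hμ1 he]
  ring

end UniformOnSphere

theorem integral_sum_norm_sum_mul_pow_four_le {N : ℕ} {J : Type*} [Fintype J]
    [MeasurableSpace (EuclideanSpace ℂ (Fin N))] [BorelSpace (EuclideanSpace ℂ (Fin N))]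
    {μ : Measure (EuclideanSpace ℂ (Fin N))} [IsProbabilityMeasure μ]
    (hμ : ∀ U : EuclideanSpace ℂ (Fin N) ≃ₗᵢ[ℂ] EuclideanSpace ℂ (Fin N), μ.map U = μ)
    (hμ1 : ∀ᵐ a ∂μ, ‖a‖ = 1) (g : Fin N → J → ℂ) {K : ℝ} (hK : 0 ≤ K)
    (hg : ∀ i, ∑ j, ‖g i j‖ ^ 4 ≤ K) :
    ∫ a, ∑ j, ‖∑ i, a i * g i j‖ ^ 4 ∂μ ≤ 2 * K := by
  set w : J → EuclideanSpace ℂ (Fin N) := fun j => WithLp.toLp 2 fun i => starRingEnd ℂ (g i j)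
  have hw : ∀ a j, ∑ i, a i * g i j = ⟪w j, a⟫_ℂ := fun a j => by
    simp [w, PiLp.inner_apply, mul_comm]
  have hw4 : ∀ j, ‖w j‖ ^ 4 ≤ N * ∑ i, ‖g i j‖ ^ 4 := fun j => by
    have h := sq_sum_le_card_mul_sum_sq (s := Finset.univ) (f := fun i => ‖g i j‖ ^ 2)
    simp only [Finset.card_univ, Fintype.card_fin, ← pow_mul] at h
    rw [show ‖w j‖ ^ 4 = (‖w j‖ ^ 2) ^ 2 by ring, EuclideanSpace.norm_sq_eq]
    simpa [w] using h
  have hfactor : 2 / (N * (N + 1)) * (N : ℝ) ≤ 2 / (N + 1) :=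
    calc 2 / (N * (N + 1)) * (N : ℝ) = 2 / (N + 1) * (N / N) := by
          simp only [div_eq_mul_inv, mul_inv]; ring
      _ ≤ 2 / (N + 1) := mul_le_of_le_one_right (by positivity) (div_self_le_one _)
  calc ∫ a, ∑ j, ‖∑ i, a i * g i j‖ ^ 4 ∂μ
      = 2 / (N * (N + 1)) * ∑ j, ‖w j‖ ^ 4 := by
        simp only [hw]
        rw [integral_finsetSum _ fun j _ => ?_, Finset.mul_sum]
        · simp only [integral_norm_inner_pow_four hμ hμ1, finrank_euclideanSpace_fin]
          exact Finset.sum_congr rfl fun j _ => by ring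
        exact Continuous.integrable_of_ae_norm_eq_one hμ1 (by fun_prop)
    _ ≤ 2 / (N * (N + 1)) * ∑ j, N * ∑ i, ‖g i j‖ ^ 4 := by gcongr with j; exact hw4 j
    _ ≤ 2 / (N + 1) * ∑ i, ∑ j, ‖g i j‖ ^ 4 := by
        rw [← Finset.mul_sum, Finset.sum_comm, ← mul_assoc]
        gcongr
    _ ≤ 2 / (N + 1) * (N * K) := by
        gcongr
        simpa using Finset.sum_le_sum fun i (_ : i ∈ Finset.univ) => hg i
    _ = 2 * (N / (N + 1)) * K := by ring
    _ ≤ 2 * 1 * K := by gcongr; exact div_le_one_of_le₀ (by linarith) (by positivity)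
    _ = 2 * K := by ring

theorem moderate_energy_distribution_sufficient_general
    {J : Type*} [Fintype J] {D : ℕ} (hD : 1 ≤ D) {N : ℕ} (g : Fin N → J → ℂ) (V ε η : ℝ)
    (hg : ∀ i, ∑ j, ‖g i j‖ ^ 4 ≤ Real.exp ((η - ε) * V) / (D : ℝ))
    [MeasurableSpace (EuclideanSpace ℂ (Fin N))] [BorelSpace (EuclideanSpace ℂ (Fin N))]
    (μ : Measure (EuclideanSpace ℂ (Fin N))) [IsProbabilityMeasure μ]
    (hsphere : μ {a : EuclideanSpace ℂ (Fin N) | ‖a‖ ≠ 1} = 0)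
    (hinv : ∀ U : EuclideanSpace ℂ (Fin N) ≃ₗᵢ[ℂ] EuclideanSpace ℂ (Fin N), μ.map U = μ) :
    μ {a : EuclideanSpace ℂ (Fin N) |
        ¬ (∑ j, ‖∑ i, a i * g i j‖ ^ 4 ≤ Real.exp (η * V) / (D : ℝ))}
      ≤ ENNReal.ofReal (2 * Real.exp (-ε * V)) := by
  have hD0 : (0 : ℝ) < D := by exact_mod_cast hD
  have hμ1 : ∀ᵐ a ∂μ, ‖a‖ = 1 := ae_iff.mpr hsphere
  simp only [not_le]
  calc _ ≤ ENNReal.ofReal (2 * (Real.exp ((η - ε) * V) / D) / (Real.exp (η * V) / D)) :=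
        measure_lt_le_ofReal_div_of_integral_le (ae_of_all _ fun a => by positivity)
          (Continuous.integrable_of_ae_norm_eq_one hμ1 (by fun_prop))
          (integral_sum_norm_sum_mul_pow_four_le hinv hμ1 g (by positivity) hg) (by positivity)
    _ = ENNReal.ofReal (2 * Real.exp (-ε * V)) := by
        rw [mul_div_assoc, div_div_div_cancel_right₀ hD0.ne', ← Real.exp_sub]
        ring_nf

/-- **Sufficient condition for a moderate energy distribution.**  Let `(ψ_j)_{j∈J}` be an
orthonormal family (`|J| = D ≥ 1`) and `(ξ_i)_{i<N}` an orthonormal family with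
`ξ_i = ∑_j g_{i,j} ψ_j` satisfying `∑_j |g_{i,j}|⁴ ≤ exp((η−ε)V)/D` for all `i`.  If the
coefficient vector `a = (α_1,…,α_N)` is drawn from the uniform (unitarily invariant)
probability measure on the unit sphere of `ℂ^N`, so that `φ₀ = ∑_i α_i ξ_i` has expansion
coefficients `c_j = ∑_i α_i g_{i,j}`, then the bad set where `∑_j |c_j|⁴ > exp(ηV)/D` has
measure at most `2·exp(−εV)`. -/
theorem moderate_energy_distribution_sufficient
    {E : Type*} [NormedAddCommGroup E] [InnerProductSpace ℂ E]
    {J : Type*} [Fintype J] {D : ℕ} (hD : 1 ≤ D) (hcard : Fintype.card J = D)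
    (ψ : J → E) (hψ : Orthonormal ℂ ψ)
    {N : ℕ} (ξ : Fin N → E) (hξ : Orthonormal ℂ ξ)
    (g : Fin N → J → ℂ) (hexp : ∀ i, ξ i = ∑ j, g i j • ψ j)
    (V ε η : ℝ) (hV : 0 < V) (hε : 0 < ε) (hεη : ε < η)
    (hg : ∀ i, ∑ j, ‖g i j‖ ^ 4 ≤ Real.exp ((η - ε) * V) / (D : ℝ))
    [MeasurableSpace (EuclideanSpace ℂ (Fin N))] [BorelSpace (EuclideanSpace ℂ (Fin N))]
    (μ : Measure (EuclideanSpace ℂ (Fin N))) [IsProbabilityMeasure μ]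
    (hsphere : μ {a : EuclideanSpace ℂ (Fin N) | ‖a‖ ≠ 1} = 0)
    (hinv : ∀ U : EuclideanSpace ℂ (Fin N) ≃ₗᵢ[ℂ] EuclideanSpace ℂ (Fin N), μ.map U = μ) :
    μ {a : EuclideanSpace ℂ (Fin N) |
        ¬ (∑ j, ‖∑ i, a i * g i j‖ ^ 4 ≤ Real.exp (η * V) / (D : ℝ))}
      ≤ ENNReal.ofReal (2 * Real.exp (-ε * V)) :=
  moderate_energy_distribution_sufficient_general hD g V ε η hg μ hsphere hinv
end

section
/- Let L > 2 be a prime number. For a tuple n = (n_1,…,n_{2L}) with each n_j ∈ {0,1}, set |n| := ∑_{j=1}^{2L} n_j, z₂(n) := ∑_{j=1}^{2L} n_j exp(2πij/L), and z₁(n) := ∑_{j=1}^{2L} n_j exp(πij/L). Then for any two such tuples n and n' with |n| = |n'| < L/2, one has z₂(n) = z₂(n') and z₁(n) = z₁(n') simultaneously if and only if n = n'. -/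
/-!
Write `ζ = exp(πi/L)`, a primitive `2L`-th root of unity, and `c_j = n_j - n'_j`. Equality of
the `z₂` values says `∑ c_j ω^j = 0` for the primitive `L`-th root `ω = ζ²`. Folding the sum
with `ω^L = 1`, and using that the only rational relation among `1, ω, …, ω^{L-1}` is
`1 + ω + ⋯ + ω^{L-1} = 0` (the minimal polynomial of `ω` is the `L`-th cyclotomic polynomial),
the equal totals force `c_{L+j} = -c_j`. Folding the `z₁` relation with `ζ^L = -1` then gives
`∑_{j<L} (-1)^j c_j (-ζ)^j = 0` with `-ζ` a primitive `L`-th root (`L` is odd), so `(-1)^j c_j`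
is constant on `j < L`. That constant vanishes because `|n| + |n'| < L`: some `j < L` has
`n_j = n'_j = 0`.
-/

open Polynomial Finset

theorem IsPrimitiveRoot.neg_of_odd {R : Type*} [CommRing R] [IsDomain R] {ζ : R} {k : ℕ}
    (hζ : IsPrimitiveRoot ζ (2 * k)) (hk : Odd k) : IsPrimitiveRoot (-ζ) k := by
  have hζk : ζ ^ k = -1 := (hζ.pow (by grind) (mul_comm 2 k)).eq_neg_one_of_two_right
  refine ⟨by rw [neg_pow, hζk, hk.neg_one_pow, neg_one_mul, neg_neg], fun l hl => ?_⟩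
  have : ζ ^ (2 * l) = 1 := by rw [pow_mul, ← neg_sq, ← pow_mul, mul_comm, pow_mul, hl, one_pow]
  exact Nat.dvd_of_mul_dvd_mul_left two_pos (hζ.dvd_of_pow_eq_one _ this)

theorem IsPrimitiveRoot.eq_of_sum_range_mul_pow_eq_zero {K : Type*} [Field K] [CharZero K]
    {p : ℕ} (hp : p.Prime) {μ : K} (hμ : IsPrimitiveRoot μ p) {a : ℕ → ℚ}
    (h : ∑ i ∈ range p, (a i : K) * μ ^ i = 0) {i : ℕ} (hi : i < p) : a i = a 0 := by
  have := Fact.mk hp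
  set P : ℚ[X] := ∑ i ∈ range p, C (a i) * X ^ i
  have hPcoeff : ∀ i < p, P.coeff i = a i := by
    intro i hi
    simp [P, coeff_C_mul, coeff_X_pow, hi]
  have hdvd : cyclotomic p ℚ ∣ P := by
    rw [cyclotomic_eq_minpoly_rat hμ hp.pos]
    exact minpoly.dvd _ _ (by simpa [P, map_sum] using h)
  have hdeg : P.natDegree ≤ (cyclotomic p ℚ).natDegree := by
    rw [natDegree_cyclotomic, Nat.totient_prime hp]
    refine natDegree_sum_le_of_forall_le _ _ fun j hj => (natDegree_C_mul_X_pow_le _ _).trans ?_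
    have := mem_range.mp hj
    omega
  have hcyc : ∀ i < p, (cyclotomic p ℚ).coeff i = 1 := by
    intro i hi
    simp [cyclotomic_prime, coeff_X_pow, hi]
  have hP := eq_leadingCoeff_mul_of_monic_of_dvd_of_natDegree_le (cyclotomic.monic p ℚ) hdvd hdeg
  rw [← hPcoeff i hi, ← hPcoeff 0 hp.pos, hP, coeff_C_mul, coeff_C_mul, hcyc i hi, hcyc 0 hp.pos]

theorem sum_range_two_mul_mul_pow {R : Type*} [CommSemiring R] (f : ℕ → R) (x : R) (m : ℕ) :
    ∑ j ∈ range (2 * m), f j * x ^ j = ∑ j ∈ range m, (f j + x ^ m * f (m + j)) * x ^ j := by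
  rw [two_mul, sum_range_add, ← sum_add_distrib]
  exact sum_congr rfl fun j _ => by ring

section RationalRelations

variable {K : Type*} [Field K] [CharZero K] {p : ℕ} {c : ℕ → ℚ}

theorem IsPrimitiveRoot.antiperiodic_of_sum_mul_pow_eq_zero (hp : p.Prime) {ω : K}
    (hω : IsPrimitiveRoot ω p) (hsum : ∑ j ∈ range (2 * p), c j = 0)
    (h : ∑ j ∈ range (2 * p), (c j : K) * ω ^ j = 0) : ∀ j < p, c (p + j) = -c j := by
  have hconst : ∀ {j}, j < p → c j + c (p + j) = c 0 + c (p + 0) :=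
    hω.eq_of_sum_range_mul_pow_eq_zero hp (a := fun j => c j + c (p + j))
      (by simpa [sum_range_two_mul_mul_pow, hω.pow_eq_one] using h)
  have hsum' : ∑ j ∈ range p, (c j + c (p + j)) = p * (c 0 + c (p + 0)) := by
    rw [sum_congr rfl fun j hj => hconst (mem_range.mp hj), sum_const, card_range, nsmul_eq_mul]
  rw [sum_add_distrib, ← sum_range_add, ← two_mul, hsum] at hsum'
  have hzero : c 0 + c (p + 0) = 0 :=
    (mul_eq_zero.mp hsum'.symm).resolve_left (Nat.cast_ne_zero.mpr hp.ne_zero)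
  intro j hj
  linarith [hconst hj]

theorem IsPrimitiveRoot.alternating_of_sum_mul_pow_eq_zero (hp : p.Prime) (hodd : Odd p) {ζ : K}
    (hζ : IsPrimitiveRoot ζ (2 * p)) (hanti : ∀ j < p, c (p + j) = -c j)
    (h : ∑ j ∈ range (2 * p), (c j : K) * ζ ^ j = 0) : ∀ j < p, (-1) ^ j * c j = c 0 := by
  have hζp : ζ ^ p = -1 := (hζ.pow (by grind) (mul_comm 2 p)).eq_neg_one_of_two_right
  have hfold : ∑ j ∈ range (2 * p), (c j : K) * ζ ^ j
      = 2 * ∑ j ∈ range p, (((-1) ^ j * c j : ℚ) : K) * (-ζ) ^ j := by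
    rw [sum_range_two_mul_mul_pow, hζp, mul_sum]
    refine sum_congr rfl fun j hj => ?_
    have hsign : ((-1 : K) ^ j) ^ 2 = 1 := by rw [← pow_mul, pow_mul', neg_one_sq, one_pow]
    rw [hanti j (mem_range.mp hj), neg_eq_neg_one_mul ζ, mul_pow]
    push_cast
    linear_combination (-2 * (c j : K) * ζ ^ j) * hsign
  rw [hfold] at h
  intro j hj
  simpa using (hζ.neg_of_odd hodd).eq_of_sum_range_mul_pow_eq_zero hp
    ((mul_eq_zero.mp h).resolve_left two_ne_zero) hj

end RationalRelations

theorem exists_lt_eq_of_two_mul_sum_lt {N N' : ℕ → ℕ} {p : ℕ}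
    (hsum : ∑ j ∈ range (2 * p), N j = ∑ j ∈ range (2 * p), N' j)
    (hhalf : 2 * ∑ j ∈ range (2 * p), N j < p) : ∃ j < p, N j = N' j := by
  by_contra! hne
  have hcover : p ≤ ∑ j ∈ range p, (N j + N' j) := by
    simpa using card_nsmul_le_sum (range p) (fun j => N j + N' j) 1 fun j hj => by
      have := hne j (mem_range.mp hj)
      omega
  have hsub : ∑ j ∈ range p, (N j + N' j) ≤ ∑ j ∈ range (2 * p), (N j + N' j) :=
    sum_le_sum_of_subset (range_subset_range.mpr (by omega))
  simp only [sum_add_distrib, ← hsum] at hcover hsub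
  omega

theorem eq_of_sum_mul_pow_eq {K : Type*} [Field K] [CharZero K] {p : ℕ} (hp : p.Prime)
    (hodd : Odd p) {ζ : K} (hζ : IsPrimitiveRoot ζ (2 * p)) {N N' : ℕ → ℕ}
    (hsum : ∑ j ∈ range (2 * p), N j = ∑ j ∈ range (2 * p), N' j)
    (hhalf : 2 * ∑ j ∈ range (2 * p), N j < p)
    (h₂ : ∑ j ∈ range (2 * p), (N j : K) * (ζ ^ 2) ^ j
      = ∑ j ∈ range (2 * p), (N' j : K) * (ζ ^ 2) ^ j)
    (h₁ : ∑ j ∈ range (2 * p), (N j : K) * ζ ^ j = ∑ j ∈ range (2 * p), (N' j : K) * ζ ^ j) :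
    ∀ j < 2 * p, N j = N' j := by
  set c : ℕ → ℚ := fun j => N j - N' j
  have hc : ∀ x : K, ∑ j ∈ range (2 * p), (N j : K) * x ^ j
      = ∑ j ∈ range (2 * p), (N' j : K) * x ^ j → ∑ j ∈ range (2 * p), (c j : K) * x ^ j = 0 := by
    intro x hx
    simp only [c, Rat.cast_sub, Rat.cast_natCast, sub_mul, sum_sub_distrib, hx, sub_self]
  have hcsum : ∑ j ∈ range (2 * p), c j = 0 := by
    simp only [c, sum_sub_distrib, sub_eq_zero]
    exact_mod_cast hsum
  have hanti := (hζ.pow (by grind) rfl).antiperiodic_of_sum_mul_pow_eq_zero hp hcsum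
    (hc _ h₂)
  have halt := hζ.alternating_of_sum_mul_pow_eq_zero hp hodd hanti (hc _ h₁)
  obtain ⟨j₀, hj₀, hN⟩ := exists_lt_eq_of_two_mul_sum_lt hsum hhalf
  have hc0 : ∀ j < p, c j = 0 := by
    intro j hj
    have := (halt j hj).trans (halt j₀ hj₀).symm
    simpa [c, hN] using this
  intro j hj
  have hcj : c j = 0 := by
    rcases lt_or_ge j p with hjp | hjp
    · exact hc0 j hjp
    · obtain ⟨i, rfl⟩ := Nat.exists_eq_add_of_le hjp
      rw [hanti i (by omega), hc0 i (by omega), neg_zero]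
  simpa [c, sub_eq_zero] using hcj

theorem Complex.exp_mul_natCast_add_one_div (θ : ℂ) (j L : ℕ) :
    Complex.exp (θ * ((j : ℂ) + 1) / L) = Complex.exp (θ / L) ^ (j + 1) := by
  rw [← Complex.exp_nat_mul]
  push_cast
  ring_nf

theorem sum_fin_mul_pow_succ {K : Type*} [CommSemiring K] {m : ℕ} (f : Fin m → ℕ) (x : K) :
    ∑ j : Fin m, (f j : K) * x ^ ((j : ℕ) + 1)
      = x * ∑ j ∈ range m, ((if h : j < m then f ⟨j, h⟩ else 0 : ℕ) : K) * x ^ j := by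
  rw [sum_fin_eq_sum_range, mul_sum]
  refine sum_congr rfl fun j hj => ?_
  simp only [mem_range.mp hj, dite_true]
  ring

theorem double_chain_occupation_determined_general
    (L : ℕ) (hL : Nat.Prime L) (hL2 : 2 < L)
    (n n' : Fin (2 * L) → ℕ)
    (hsum : ∑ j, n j = ∑ j, n' j)
    (hhalf : 2 * ∑ j, n j < L) :
    ((∑ j, (n j : ℂ) * Complex.exp (2 * Real.pi * Complex.I * ((j : ℕ) + 1) / (L : ℂ))
        = ∑ j, (n' j : ℂ) * Complex.exp (2 * Real.pi * Complex.I * ((j : ℕ) + 1) / (L : ℂ))) ∧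
     (∑ j, (n j : ℂ) * Complex.exp (Real.pi * Complex.I * ((j : ℕ) + 1) / (L : ℂ))
        = ∑ j, (n' j : ℂ) * Complex.exp (Real.pi * Complex.I * ((j : ℕ) + 1) / (L : ℂ))))
    ↔ n = n' := by
  refine ⟨fun ⟨h₂, h₁⟩ => ?_, by rintro rfl; exact ⟨rfl, rfl⟩⟩
  set ζ := Complex.exp (Real.pi * Complex.I / L)
  have hζ : IsPrimitiveRoot ζ (2 * L) := by
    convert Complex.isPrimitiveRoot_exp (2 * L) (by omega) using 2
    push_cast
    field_simp
  have hζ2 : Complex.exp (2 * Real.pi * Complex.I / L) = ζ ^ 2 := by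
    rw [← Complex.exp_nat_mul]
    ring_nf
  simp only [Complex.exp_mul_natCast_add_one_div, hζ2, sum_fin_mul_pow_succ] at h₁ h₂
  rw [sum_fin_eq_sum_range, sum_fin_eq_sum_range] at hsum
  rw [sum_fin_eq_sum_range] at hhalf
  have hN := eq_of_sum_mul_pow_eq hL (hL.odd_of_ne_two (by omega)) hζ hsum hhalf
    (mul_left_cancel₀ (pow_ne_zero 2 (Complex.exp_ne_zero _)) h₂)
    (mul_left_cancel₀ (Complex.exp_ne_zero _) h₁)
  funext j
  simpa [j.isLt] using hN j j.isLt

/-- For a prime `L > 2` and 0-1 tuples `n, n'` of length `2L` with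
`|n| = |n'| < L/2`, the pair of sums `z₂(n) = ∑_j n_j exp(2πij/L)` and
`z₁(n) = ∑_j n_j exp(πij/L)` (with `j` running over `1,…,2L`) determines `n`:
one has `z₂(n) = z₂(n')` and `z₁(n) = z₁(n')` simultaneously if and only if `n = n'`. -/
theorem double_chain_occupation_determined
    (L : ℕ) (hL : Nat.Prime L) (hL2 : 2 < L)
    (n n' : Fin (2 * L) → ℕ)
    (hn : ∀ j, n j ≤ 1) (hn' : ∀ j, n' j ≤ 1)
    (hsum : ∑ j, n j = ∑ j, n' j)
    (hhalf : 2 * ∑ j, n j < L) :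
    ((∑ j, (n j : ℂ) * Complex.exp (2 * Real.pi * Complex.I * ((j : ℕ) + 1) / (L : ℂ))
        = ∑ j, (n' j : ℂ) * Complex.exp (2 * Real.pi * Complex.I * ((j : ℕ) + 1) / (L : ℂ))) ∧
     (∑ j, (n j : ℂ) * Complex.exp (Real.pi * Complex.I * ((j : ℕ) + 1) / (L : ℂ))
        = ∑ j, (n' j : ℂ) * Complex.exp (Real.pi * Complex.I * ((j : ℕ) + 1) / (L : ℂ))))
    ↔ n = n' :=
  double_chain_occupation_determined_general L hL hL2 n n' hsum hhalf
end

section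
/- (Generic nondegeneracy of the free-fermion spectrum on a double chain.) Let L > 2 be a prime number, let N be a positive integer with N < L/2, and let λ₀ > 0. For a finite set K of wave numbers contained in 𝒦 := { (π/L)·j : j = 1,2,…,2L } and parameters λ, θ ∈ ℝ, define E_K(λ,θ) := ∑_{k∈K} ( cos(2k+θ) + λ·cos(k+θ) ). Then there exists a finite set F ⊂ ℝ such that for every λ ∈ (0, λ₀] \ F there exists a finite set G(λ) ⊂ ℝ such that for every θ ∈ [0, 2π) \ G(λ) the following holds: for all subsets K, K' ⊆ 𝒦 with |K| = |K'| = N, E_K(λ,θ) = E_{K'}(λ,θ) implies K = K'. -/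
/-!
Write `ζ = exp (π i / L)`, a primitive `2L`-th root of unity, and `K = {π j / L : j ∈ J}`. Then
`E_K(λ, θ) = Re (exp (i θ) (A_K + λ B_K))` with `A_K = ∑_{j ∈ J} ζ ^ (2 j)`, `B_K = ∑_{j ∈ J} ζ ^ j`.

The heart of the matter is that `K ↦ (A_K, B_K)` is injective on `N`-element sets. For
`d = 1_J - 1_{J'}`, folding the two vanishing sums modulo `L` gives vanishing rational combinations
of powers of the primitive `L`-th roots `ζ²` and `-ζ`, whose minimal polynomial is
`1 + X + ⋯ + X ^ (L - 1)`. Hence `d j + d (j + L)` and `(-1) ^ j (d j - d (j + L))` do not depend on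
`j`, and these integer constants vanish because `∑ |d j| ≤ 2N < L`.

Two distinct pairs `(A, B)` then give equal `A + λ B` for at most one `λ`, and for `w ≠ 0` the
equation `Re (exp (i θ) w) = 0` has at most two solutions `θ ∈ [0, 2π)`.
-/

open Finset Polynomial Complex ComplexConjugate

theorem IsPrimitiveRoot.eq_of_sum_mul_pow_eq_zero {K : Type*} [Field K] [CharZero K] {p : ℕ}
    (hp : p.Prime) {ω : K} (hω : IsPrimitiveRoot ω p) {c : ℕ → ℚ}
    (h : ∑ i ∈ range p, (c i : K) * ω ^ i = 0) : ∀ i < p, c i = c 0 := by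
  have := Fact.mk hp
  set P : ℚ[X] := ∑ i ∈ range p, C (c i) * X ^ i
  have hdvd : cyclotomic p ℚ ∣ P := by
    rw [cyclotomic_eq_minpoly_rat hω hp.pos]
    exact minpoly.dvd ℚ ω (by simpa [P] using h)
  have hdeg : P.natDegree ≤ (cyclotomic p ℚ).natDegree := by
    rw [natDegree_cyclotomic, Nat.totient_prime hp]
    exact natDegree_sum_le_of_forall_le _ _ fun i hi =>
      (natDegree_C_mul_X_pow_le _ _).trans (by have := mem_range.1 hi; omega)
  have hP := eq_leadingCoeff_mul_of_monic_of_dvd_of_natDegree_le (cyclotomic.monic p ℚ) hdvd hdeg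
  have hc : ∀ i < p, c i = P.leadingCoeff := fun i hi => by
    have := congr_arg (coeff · i) hP
    simpa [P, cyclotomic_prime, finsetSum_coeff, coeff_X_pow, hi] using this
  exact fun i hi => (hc i hi).trans (hc 0 hp.pos).symm

theorem IsPrimitiveRoot.pow_eq_neg_one {R : Type*} [CommRing R] [IsDomain R] {n : ℕ} {ζ : R}
    (hζ : IsPrimitiveRoot ζ (2 * n)) (hn : 0 < n) : ζ ^ n = -1 :=
  (hζ.pow (by omega) (mul_comm 2 n)).eq_neg_one_of_two_right

theorem IsPrimitiveRoot.neg_of_two_mul {K : Type*} [CommRing K] [IsDomain K] {p : ℕ} (hp : p.Prime)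
    (hp2 : p ≠ 2) {ζ : K} (hζ : IsPrimitiveRoot ζ (2 * p)) : IsPrimitiveRoot (-ζ) p := by
  have := Fact.mk hp
  have hζp := hζ.pow_eq_neg_one hp.pos
  have hζ2 : ζ ^ 2 ≠ 1 := hζ.pow_ne_one_of_pos_of_lt two_ne_zero (by have := hp.two_le; omega)
  rw [IsPrimitiveRoot.iff_orderOf, orderOf_eq_prime_iff]
  refine ⟨by rw [(hp.odd_of_ne_two hp2).neg_pow, hζp, neg_neg], fun h => hζ2 ?_⟩
  rw [neg_eq_iff_eq_neg.1 h]; norm_num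

theorem Finset.sum_range_two_mul {M : Type*} [AddCommMonoid M] (f : ℕ → M) (n : ℕ) :
    ∑ j ∈ range (2 * n), f j = ∑ j ∈ range n, (f j + f (n + j)) := by
  rw [two_mul, sum_range_add, sum_add_distrib]

theorem IsPrimitiveRoot.eq_zero_of_sum_mul_pow_eq_zero_of_sum_abs_lt {K : Type*} [Field K]
    [CharZero K] {p : ℕ} (hp : p.Prime) {ω : K} (hω : IsPrimitiveRoot ω p) {e : ℕ → ℤ}
    (hsmall : ∑ j ∈ range p, |e j| < p) (h : ∑ j ∈ range p, (e j : K) * ω ^ j = 0) :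
    ∀ j < p, e j = 0 := by
  have he : ∀ j < p, e j = e 0 := fun j hj =>
    mod_cast hω.eq_of_sum_mul_pow_eq_zero hp (c := fun j => e j) (by simpa using h) j hj
  rw [sum_congr rfl fun j hj => congr_arg abs (he j (mem_range.1 hj)), sum_const, card_range,
    nsmul_eq_mul] at hsmall
  have h0 : |e 0| ≤ 0 := by nlinarith
  exact fun j hj => abs_nonpos_iff.1 (he j hj ▸ h0)

theorem IsPrimitiveRoot.eq_zero_of_sum_mul_pow_eq_zero_of_sum_mul_sq_pow_eq_zero {K : Type*}
    [Field K] [CharZero K] {p : ℕ} (hp : p.Prime) (hp2 : p ≠ 2) {ζ : K}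
    (hζ : IsPrimitiveRoot ζ (2 * p)) {d : ℕ → ℤ} (hsmall : ∑ j ∈ range (2 * p), |d j| < p)
    (h1 : ∑ j ∈ range (2 * p), (d j : K) * ζ ^ j = 0)
    (h2 : ∑ j ∈ range (2 * p), (d j : K) * (ζ ^ 2) ^ j = 0) : ∀ j < 2 * p, d j = 0 := by
  have hζp := hζ.pow_eq_neg_one hp.pos
  have hω : IsPrimitiveRoot (ζ ^ 2) p := hζ.pow (by have := hp.pos; omega) rfl
  rw [sum_range_two_mul] at hsmall h1 h2
  have hsum : ∀ e : ℕ → ℤ, (∀ j, |e j| ≤ |d j| + |d (p + j)|) → ∑ j ∈ range p, |e j| < p :=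
    fun e he => (sum_le_sum fun j _ => he j).trans_lt hsmall
  have hplus : ∀ j < p, d j + d (p + j) = 0 := by
    refine hω.eq_zero_of_sum_mul_pow_eq_zero_of_sum_abs_lt hp (hsum _ fun j => abs_add_le _ _) ?_
    rw [← h2]
    refine sum_congr rfl fun j _ => ?_
    rw [pow_add, hω.pow_eq_one]
    push_cast; ring
  have hminus : ∀ j < p, (-1) ^ j * (d j - d (p + j)) = 0 := by
    refine (hζ.neg_of_two_mul hp hp2).eq_zero_of_sum_mul_pow_eq_zero_of_sum_abs_lt hp
      (hsum _ fun j => by simpa [abs_mul] using abs_sub _ _) ?_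
    rw [← h1]
    refine sum_congr rfl fun j _ => ?_
    have hsq : ((-1 : K) ^ j) ^ 2 = 1 := by rw [← pow_mul, mul_comm, pow_mul]; norm_num
    rw [pow_add, hζp, neg_pow ζ]
    push_cast
    linear_combination (↑(d j) - ↑(d (p + j)) : K) * ζ ^ j * hsq
  have hpair : ∀ i < p, d i = 0 ∧ d (p + i) = 0 := fun i hi => by
    have h := hminus i hi
    rw [mul_eq_zero, or_iff_right (pow_ne_zero _ (by norm_num))] at h
    have := hplus i hi
    omega
  intro j hj
  rcases lt_or_ge j p with hjp | hjp
  · exact (hpair j hjp).1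
  · simpa [Nat.add_sub_cancel' hjp] using (hpair (j - p) (by omega)).2

theorem IsPrimitiveRoot.eq_of_sum_pow_eq_of_sum_sq_pow_eq {K : Type*} [Field K] [CharZero K]
    {p : ℕ} (hp : p.Prime) (hp2 : p ≠ 2) {ζ : K} (hζ : IsPrimitiveRoot ζ (2 * p))
    {J J' : Finset ℕ} (hJ : J ⊆ range (2 * p)) (hJ' : J' ⊆ range (2 * p))
    (hcard : #J + #J' < p) (h1 : ∑ j ∈ J, ζ ^ j = ∑ j ∈ J', ζ ^ j)
    (h2 : ∑ j ∈ J, (ζ ^ 2) ^ j = ∑ j ∈ J', (ζ ^ 2) ^ j) : J = J' := by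
  classical
  set d : ℕ → ℤ := fun j => (if j ∈ J then 1 else 0) - (if j ∈ J' then 1 else 0)
  have hd : ∀ f : ℕ → K, ∑ j ∈ range (2 * p), (d j : K) * f j = ∑ j ∈ J, f j - ∑ j ∈ J', f j := by
    intro f
    simp only [d, Int.cast_sub, Int.cast_ite, Int.cast_one, Int.cast_zero, sub_mul, ite_mul,
      one_mul, zero_mul, sum_sub_distrib, sum_ite_mem, inter_eq_right.2 hJ, inter_eq_right.2 hJ']
  have hsmall : ∑ j ∈ range (2 * p), |d j| < p := by
    calc ∑ j ∈ range (2 * p), |d j|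
        ≤ ∑ j ∈ range (2 * p), ((if j ∈ J then 1 else 0) + (if j ∈ J' then 1 else 0)) :=
          sum_le_sum fun j _ => by simp only [d]; split_ifs <;> simp
      _ = #J + #J' := by
          rw [sum_add_distrib, sum_ite_mem, sum_ite_mem, inter_eq_right.2 hJ,
            inter_eq_right.2 hJ']
          simp
      _ < p := by exact_mod_cast hcard
  have hd0 := hζ.eq_zero_of_sum_mul_pow_eq_zero_of_sum_mul_sq_pow_eq_zero hp hp2 hsmall
    (by rw [hd, h1, sub_self]) (by rw [hd, h2, sub_self])
  ext j
  by_cases hj : j < 2 * p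
  · have := hd0 j hj
    simp only [d] at this
    split_ifs at this <;> simp_all
  · exact iff_of_false (fun h => hj (mem_range.1 (hJ h))) (fun h => hj (mem_range.1 (hJ' h)))

theorem Set.Finite.exists_finite_forall_injOn {ι α β : Type*} {s : Set ι} (hs : s.Finite)
    (D : Set α) (f : α → ι → β) (h : ∀ i ∈ s, ∀ j ∈ s, i ≠ j → {t ∈ D | f t i = f t j}.Finite) :
    ∃ F : Set α, F.Finite ∧ ∀ t ∈ D, t ∉ F → Set.InjOn (f t) s := by
  set P := {q ∈ s ×ˢ s | q.1 ≠ q.2}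
  refine ⟨⋃ q ∈ P, {t ∈ D | f t q.1 = f t q.2}, ?_, ?_⟩
  · exact ((hs.prod hs).subset (Set.sep_subset _ _)).biUnion fun q hq => h _ hq.1.1 _ hq.1.2 hq.2
  · intro t ht htF i hi j hj hij
    by_contra hne
    exact htF (Set.mem_biUnion (x := (i, j)) ⟨⟨hi, hj⟩, hne⟩ ⟨ht, hij⟩)

theorem subsingleton_setOf_add_mul_eq {a b a' b' : ℂ} (h : (a, b) ≠ (a', b')) :
    {t : ℝ | a + t * b = a' + t * b'}.Subsingleton := by
  intro t (ht : a + t * b = a' + t * b') t' (ht' : a + t' * b = a' + t' * b')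
  by_cases hb : b = b'
  · subst hb
    exact absurd (by rw [add_right_cancel ht]) h
  · have : ((t : ℂ) - t') * (b - b') = 0 := by linear_combination ht - ht'
    exact_mod_cast sub_eq_zero.1 ((mul_eq_zero.1 this).resolve_right (sub_ne_zero.2 hb))

theorem exists_finite_forall_injOn_add_mul {ι : Type*} {s : Set ι} (hs : s.Finite)
    {a b : ι → ℂ} (hab : Set.InjOn (fun i => (a i, b i)) s) :
    ∃ F : Set ℝ, F.Finite ∧ ∀ t : ℝ, t ∉ F → Set.InjOn (fun i => a i + t * b i) s := by
  obtain ⟨F, hF, hinj⟩ := hs.exists_finite_forall_injOn Set.univ (fun (t : ℝ) i => a i + t * b i)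
    fun i hi j hj hij => by
      simpa only [Set.sep_univ] using (subsingleton_setOf_add_mul_eq (hab.ne hi hj hij)).finite
  exact ⟨F, hF, fun t => hinj t trivial⟩

theorem finite_setOf_re_exp_mul_eq_zero {w : ℂ} (hw : w ≠ 0) :
    {θ ∈ Set.Ico 0 (2 * Real.pi) | (exp (θ * I) * w).re = 0}.Finite := by
  have hinj : Set.InjOn (fun θ : ℝ => exp (θ * I)) (Set.Ico 0 (2 * Real.pi)) :=
    fun θ hθ θ' hθ' h => Circle.exp_injOn_Ico (by simp) hθ hθ' (Circle.ext h)
  refine Set.Finite.of_finite_image ?_ (hinj.mono fun θ hθ => hθ.1)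
  refine ((nthRoots 2 (-conj w / w)).toFinset.finite_toSet).subset ?_
  rintro _ ⟨θ, ⟨-, hθ⟩, rfl⟩
  -- on the unit circle, `Re (u w) = 0` forces `u ^ 2 w = - conj w`
  rw [Finset.mem_coe, Multiset.mem_toFinset, mem_nthRoots two_pos, eq_div_iff hw]
  have hre : exp (θ * I) * w + conj (exp (θ * I)) * conj w = 0 := by
    simpa [hθ] using add_conj (exp (θ * I) * w)
  have hunit : exp (θ * I) * conj (exp (θ * I)) = 1 := by
    rw [mul_conj, normSq_eq_norm_sq, norm_exp_ofReal_mul_I]; simp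
  linear_combination exp (θ * I) * hre - conj w * hunit

theorem exists_finite_forall_injOn_re_exp_mul {ι : Type*} {s : Set ι} (hs : s.Finite)
    {z : ι → ℂ} (hz : Set.InjOn z s) :
    ∃ G : Set ℝ, G.Finite ∧ ∀ θ ∈ Set.Ico 0 (2 * Real.pi), θ ∉ G →
      Set.InjOn (fun i => (exp (θ * I) * z i).re) s :=
  hs.exists_finite_forall_injOn _ _ fun i hi j hj hij =>
    (finite_setOf_re_exp_mul_eq_zero (sub_ne_zero.2 (hz.ne hi hj hij))).subset
      fun θ ⟨hθ, h⟩ => ⟨hθ, by rw [mul_sub, sub_re, h, sub_self]⟩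

theorem sum_cos_add_mul_cos_eq_re (K : Finset ℝ) (t θ : ℝ) :
    ∑ k ∈ K, (Real.cos (2 * k + θ) + t * Real.cos (k + θ)) =
      (exp (θ * I) * (∑ k ∈ K, exp (↑(2 * k) * I) + t * ∑ k ∈ K, exp (k * I))).re := by
  rw [mul_sum, mul_add, mul_sum, mul_sum, ← sum_add_distrib, re_sum]
  refine sum_congr rfl fun k _ => ?_
  rw [← exp_ofReal_mul_I_re (2 * k + θ), ← exp_ofReal_mul_I_re (k + θ)]
  simp only [mul_left_comm _ (t : ℂ), ← exp_add, add_re, re_ofReal_mul]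
  push_cast; ring_nf

theorem injOn_sum_exp_mul_I {L N : ℕ} (hL : L.Prime) (hL2 : 2 < L) (hNL : 2 * N < L) :
    Set.InjOn (fun K : Finset ℝ => (∑ k ∈ K, exp (↑(2 * k) * I), ∑ k ∈ K, exp (k * I)))
      {K | K ⊆ (Icc 1 (2 * L)).image (fun j : ℕ => Real.pi / L * j) ∧ #K = N} := by
  have hL0 : (L : ℝ) ≠ 0 := by exact_mod_cast hL.ne_zero
  set g : ℕ → ℝ := fun j => Real.pi / L * (j + 1)
  have hg : Function.Injective g := fun i j h => by
    simpa [g, hL0, Real.pi_ne_zero] using h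
  have h𝒦 : (Icc 1 (2 * L)).image (fun j : ℕ => Real.pi / L * j) = (range (2 * L)).image g := by
    have : Icc 1 (2 * L) = (range (2 * L)).image (· + 1) := by
      ext j
      simp only [mem_Icc, mem_image, mem_range]
      exact ⟨fun h => ⟨j - 1, by omega, by omega⟩, by rintro ⟨i, hi, rfl⟩; omega⟩
    rw [this, image_image]
    exact image_congr fun j _ => by simp [g]
  set ζ : ℂ := exp (2 * Real.pi * I / (2 * L : ℕ))
  have hζ : IsPrimitiveRoot ζ (2 * L) := isPrimitiveRoot_exp _ (by omega)
  have hζ0 : ζ ≠ 0 := exp_ne_zero _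
  have hexp : ∀ j, exp (↑(g j) * I) = ζ * ζ ^ j := fun j => by
    rw [← pow_succ', ← exp_nat_mul]
    congr 1
    simp only [g]
    push_cast
    field_simp
  have hexp2 : ∀ j, exp (↑(2 * g j) * I) = ζ ^ 2 * (ζ ^ 2) ^ j := fun j => by
    rw [← pow_succ', ← pow_mul, ← exp_nat_mul]
    congr 1
    simp only [g]
    push_cast
    field_simp
  rintro K ⟨hK, hKc⟩ K' ⟨hK', hK'c⟩ h
  rw [h𝒦] at hK hK'
  obtain ⟨J, hJ, rfl⟩ := subset_image_iff.1 hK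
  obtain ⟨J', hJ', rfl⟩ := subset_image_iff.1 hK'
  simp only [Prod.mk.injEq, sum_image fun _ _ _ _ h => hg h, hexp, hexp2, ← mul_sum] at h
  rw [card_image_of_injective _ hg] at hKc hK'c
  rw [hζ.eq_of_sum_pow_eq_of_sum_sq_pow_eq hL (by omega) hJ hJ' (by omega)
    (mul_left_cancel₀ hζ0 h.2) (mul_left_cancel₀ (pow_ne_zero 2 hζ0) h.1)]

theorem free_fermion_generic_nondegeneracy_general
    (L : ℕ) (hL : Nat.Prime L) (hL2 : 2 < L)
    (N : ℕ) (hNL : 2 * N < L)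
    (lam0 : ℝ)
    (𝒦 : Finset ℝ)
    (h𝒦 : 𝒦 = (Finset.Icc 1 (2 * L)).image fun j : ℕ => (Real.pi / (L : ℝ)) * (j : ℝ)) :
    ∃ F : Set ℝ, F.Finite ∧ ∀ lam : ℝ, lam ∈ Set.Ioc 0 lam0 → lam ∉ F →
      ∃ G : Set ℝ, G.Finite ∧ ∀ θ : ℝ, θ ∈ Set.Ico 0 (2 * Real.pi) → θ ∉ G →
        ∀ K K' : Finset ℝ, K ⊆ 𝒦 → K' ⊆ 𝒦 → K.card = N → K'.card = N →
          (∑ k ∈ K, (Real.cos (2 * k + θ) + lam * Real.cos (k + θ))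
            = ∑ k ∈ K', (Real.cos (2 * k + θ) + lam * Real.cos (k + θ))) →
          K = K' := by
  subst h𝒦
  have hs : {K | K ⊆ (Icc 1 (2 * L)).image (fun j : ℕ => Real.pi / L * j) ∧ #K = N}.Finite :=
    (finite_toSet _).subset fun K hK => mem_powerset.2 hK.1
  obtain ⟨F, hF, hFinj⟩ := exists_finite_forall_injOn_add_mul hs (injOn_sum_exp_mul_I hL hL2 hNL)
  refine ⟨F, hF, fun lam _ hlam => ?_⟩
  obtain ⟨G, hG, hGinj⟩ := exists_finite_forall_injOn_re_exp_mul hs (hFinj lam hlam)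
  refine ⟨G, hG, fun θ hθ hθG K K' hK hK' hKc hK'c hE => hGinj θ hθ hθG ⟨hK, hKc⟩ ⟨hK', hK'c⟩ ?_⟩
  simpa only [sum_cos_add_mul_cos_eq_re] using hE

/-- **Generic nondegeneracy of the free-fermion spectrum on a double chain.**  Let `L > 2` be
prime, `0 < N` with `N < L/2`, and `λ₀ > 0`.  For `K ⊆ 𝒦 = {(π/L)j : j = 1,…,2L}` set
`E_K(λ,θ) = ∑_{k∈K} (cos(2k+θ) + λ cos(k+θ))`.  Then for all `λ ∈ (0,λ₀]` outside a finite
set, and all `θ ∈ [0,2π)` outside a finite set (depending on `λ`), the energies `E_K(λ,θ)` of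
the `N`-element subsets `K ⊆ 𝒦` are pairwise distinct. -/
theorem free_fermion_generic_nondegeneracy
    (L : ℕ) (hL : Nat.Prime L) (hL2 : 2 < L)
    (N : ℕ) (hN : 0 < N) (hNL : 2 * N < L)
    (lam0 : ℝ) (hlam0 : 0 < lam0)
    (𝒦 : Finset ℝ)
    (h𝒦 : 𝒦 = (Finset.Icc 1 (2 * L)).image fun j : ℕ => (Real.pi / (L : ℝ)) * (j : ℝ)) :
    ∃ F : Set ℝ, F.Finite ∧ ∀ lam : ℝ, lam ∈ Set.Ioc 0 lam0 → lam ∉ F →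
      ∃ G : Set ℝ, G.Finite ∧ ∀ θ : ℝ, θ ∈ Set.Ico 0 (2 * Real.pi) → θ ∉ G →
        ∀ K K' : Finset ℝ, K ⊆ 𝒦 → K' ⊆ 𝒦 → K.card = N → K'.card = N →
          (∑ k ∈ K, (Real.cos (2 * k + θ) + lam * Real.cos (k + θ))
            = ∑ k ∈ K', (Real.cos (2 * k + θ) + lam * Real.cos (k + θ))) →
          K = K' :=
  free_fermion_generic_nondegeneracy_general L hL hL2 N hNL lam0 𝒦 h𝒦
end

section
/- (Thermal equilibrium of mixed states with large full effective dimension.) Let E be a finite-dimensional complex inner product space, let E₀ ⊆ E be a subspace of dimension D ≥ 1 with orthogonal projection Q, and let H be a self-adjoint operator on E that leaves E₀ invariant. Let ρ be a positive semidefinite operator with Tr ρ = 1 whose range is contained in E₀, and set ρ(t) := exp(−itH) ρ exp(itH). Let P be a self-adjoint operator with 0 ≤ P ≤ 1. Let V > 0, α > 0, ν > 0 and 0 ≤ η < γ with γ − η > 2(α+ν). Assume the thermodynamic bound Tr(Q P Q)/D ≤ exp(−γV) and the full effective-dimension bound D_eff^{full} := (Tr ρ²)^{−1} ≥ exp(−ηV)·D.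 Then for every t ∈ ℝ one has Tr( ρ(t) P ) ≤ exp(−αV). -/
/-!
Write `ρ(t) = U ρ U*` with `U = exp(-itH)` unitary. Since the self-adjoint `H` leaves `E₀`
invariant it commutes with `Q`, hence so does `U`, and `ρ(t) = Q ρ(t) Q`. Therefore
`Tr(ρ(t) P) = Tr(ρ(t) QPQ)` and `Tr ρ(t)² = Tr ρ²`. In an eigenbasis `(bᵢ, μᵢ)` of `ρ(t)`,
`Tr(ρ(t) QPQ) = ∑ μᵢ τᵢ` with `τᵢ = ⟪bᵢ, QPQ bᵢ⟫ ∈ [0, 1]`, so Cauchy–Schwarz and `τᵢ² ≤ τᵢ` give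
`Tr(ρ(t) P)² ≤ Tr ρ² · Tr(QPQ) ≤ (e^{-ηV} D)⁻¹ · e^{-γV} D = e^{(η-γ)V}`,
and `(γ - η) / 2 > α`.
-/

open scoped InnerProductSpace

theorem IsStarProjection.commute_of_mul_mul_self_eq {R : Type*} [Semiring R] [StarRing R]
    {p h : R} (hp : IsStarProjection p) (hh : IsSelfAdjoint h) (hph : p * h * p = h * p) :
    Commute p h := by
  have hph' : p * h * p = p * h := by
    simpa [hp.isSelfAdjoint.star_eq, hh.star_eq, mul_assoc] using congrArg star hph
  exact hph'.symm.trans hph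

section Exp

variable {A : Type*} [CStarAlgebra A] {H : A}

theorem IsSelfAdjoint.star_exp_neg_I_mul_smul (hH : IsSelfAdjoint H) (t : ℝ) :
    star (NormedSpace.exp ((-Complex.I * t) • H)) = NormedSpace.exp ((Complex.I * t) • H) := by
  simp [NormedSpace.star_exp, hH.star_eq, Complex.conj_ofReal]

theorem IsSelfAdjoint.exp_neg_I_mul_smul_mem_unitary (hH : IsSelfAdjoint H) (t : ℝ) :
    NormedSpace.exp ((-Complex.I * t) • H) ∈ unitary A :=
  letI : NormedAlgebra ℚ A := .restrictScalars ℚ ℂ A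
  NormedSpace.exp_mem_unitary_of_mem_skewAdjoint
    (hH.smul_mem_skewAdjoint (by simp [skewAdjoint.mem_iff]))

end Exp

section InnerProductSpace

variable {𝕜 E : Type*} [RCLike 𝕜] [NormedAddCommGroup E] [InnerProductSpace 𝕜 E]

namespace ContinuousLinearMap

local notation "tr" => LinearMap.trace 𝕜 E

theorem trace_mul_comm [FiniteDimensional 𝕜 E] (f g : E →L[𝕜] E) :
    tr (f * g).toLinearMap = tr (g * f).toLinearMap :=
  LinearMap.trace_mul_comm 𝕜 f.toLinearMap g.toLinearMap

variable [CompleteSpace E] [FiniteDimensional 𝕜 E]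

theorem trace_mul_eq_trace_mul_conj {Q S : E →L[𝕜] E} (hQ : IsSelfAdjoint Q)
    (hS : IsSelfAdjoint S) (hQS : Q * S = S) (P : E →L[𝕜] E) :
    tr (S * P).toLinearMap = tr (S * (Q * P * Q)).toLinearMap := by
  have hSQ : S * Q = S := by simpa [hQ.star_eq, hS.star_eq] using congrArg star hQS
  calc tr (S * P).toLinearMap = tr (Q * (S * P)).toLinearMap := by rw [← mul_assoc, hQS]
    _ = tr (S * P * Q).toLinearMap := trace_mul_comm _ _
    _ = tr (S * (Q * P * Q)).toLinearMap := by rw [← mul_assoc, ← mul_assoc, hSQ]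

theorem trace_conj_unitary_mul_self {U : E →L[𝕜] E} (hU : U ∈ unitary (E →L[𝕜] E))
    (ρ : E →L[𝕜] E) :
    tr ((U * ρ * star U) * (U * ρ * star U)).toLinearMap = tr (ρ * ρ).toLinearMap := by
  have h : U * ρ * star U * (U * ρ * star U) = U * (ρ * ρ * star U) := by
    simp only [mul_assoc]
    rw [← mul_assoc (star U) U, Unitary.star_mul_self_of_mem hU, one_mul]
  rw [h, trace_mul_comm, mul_assoc, Unitary.star_mul_self_of_mem hU, mul_one]

theorem re_trace_mul_sq_le {S : E →L[𝕜] E} (hS : IsSelfAdjoint S) {T : E →L[𝕜] E}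
    (hT0 : ∀ x, 0 ≤ RCLike.re ⟪x, T x⟫_𝕜) (hT1 : ∀ x, RCLike.re ⟪x, T x⟫_𝕜 ≤ ‖x‖ ^ 2) :
    RCLike.re (tr (S * T).toLinearMap) ^ 2
      ≤ RCLike.re (tr (S * S).toLinearMap) * RCLike.re (tr T.toLinearMap) := by
  have hS' : (S : E →ₗ[𝕜] E).IsSymmetric := hS.isSymmetric
  set b := hS'.eigenvectorBasis rfl
  set μ := hS'.eigenvalues rfl
  set τ : Fin _ → ℝ := fun i ↦ RCLike.re ⟪b i, T (b i)⟫_𝕜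
  have hb (i) : S (b i) = (μ i : 𝕜) • b i := hS'.apply_eigenvectorBasis rfl i
  have hST : RCLike.re (tr (S * T).toLinearMap) = ∑ i, μ i * τ i := by
    rw [trace_mul_comm, LinearMap.trace_eq_sum_inner _ b, map_sum]
    refine Finset.sum_congr rfl fun i _ ↦ ?_
    simp [hb, inner_smul_right, τ]
  have hSS : RCLike.re (tr (S * S).toLinearMap) = ∑ i, μ i ^ 2 := by
    rw [LinearMap.trace_eq_sum_inner _ b, map_sum]
    refine Finset.sum_congr rfl fun i _ ↦ ?_
    simp [hb, inner_smul_right, sq]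
  have hT : RCLike.re (tr T.toLinearMap) = ∑ i, τ i := by
    rw [LinearMap.trace_eq_sum_inner _ b, map_sum]
    rfl
  have hτ (i) : τ i ^ 2 ≤ τ i := by
    have h1 := hT1 (b i)
    rw [b.orthonormal.1 i] at h1
    nlinarith [hT0 (b i)]
  rw [hST, hSS, hT]
  calc (∑ i, μ i * τ i) ^ 2 ≤ (∑ i, μ i ^ 2) * ∑ i, τ i ^ 2 :=
        Finset.sum_mul_sq_le_sq_mul_sq _ _ _
    _ ≤ (∑ i, μ i ^ 2) * ∑ i, τ i := by gcongr with i; exact hτ i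

end ContinuousLinearMap

section Compression

variable [CompleteSpace E] {Q P : E →L[𝕜] E}

theorem IsStarProjection.commute_of_range_mem_invtSubmodule {H : E →L[𝕜] E}
    (hQ : IsStarProjection Q) (hH : IsSelfAdjoint H)
    (hinv : Q.range ∈ Module.End.invtSubmodule (H : E →ₗ[𝕜] E)) : Commute Q H :=
  hQ.commute_of_mul_mul_self_eq hH <|
    ContinuousLinearMap.IsIdempotentElem.conj_eq_of_range_mem_invtSubmodule
      hQ.isIdempotentElem hinv

theorem IsSelfAdjoint.inner_conj_apply (hQ : IsSelfAdjoint Q) (P : E →L[𝕜] E) (x : E) :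
    ⟪x, (Q * P * Q) x⟫_𝕜 = ⟪Q x, P (Q x)⟫_𝕜 :=
  (hQ.isSymmetric _ _).symm

theorem IsSelfAdjoint.re_inner_conj_nonneg (hQ : IsSelfAdjoint Q)
    (hP : ∀ x, 0 ≤ RCLike.re ⟪x, P x⟫_𝕜) (x : E) : 0 ≤ RCLike.re ⟪x, (Q * P * Q) x⟫_𝕜 := by
  rw [hQ.inner_conj_apply]
  exact hP (Q x)

theorem IsStarProjection.re_inner_conj_le_norm_sq (hQ : IsStarProjection Q)
    (hP : ∀ x, RCLike.re ⟪x, P x⟫_𝕜 ≤ ‖x‖ ^ 2) (x : E) :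
    RCLike.re ⟪x, (Q * P * Q) x⟫_𝕜 ≤ ‖x‖ ^ 2 := by
  have hQx : ‖Q x‖ ≤ ‖x‖ :=
    (Q.le_opNorm x).trans (mul_le_of_le_one_left (norm_nonneg x) hQ.norm_le)
  rw [hQ.isSelfAdjoint.inner_conj_apply]
  exact (hP (Q x)).trans (by gcongr)

end Compression

end InnerProductSpace

theorem mul_le_exp_of_le_inv {a b D η γ V : ℝ} (hD : 0 < D)
    (ha : Real.exp (-η * V) * D ≤ a⁻¹) (hb : b / D ≤ Real.exp (-γ * V)) :
    a * b ≤ Real.exp ((η - γ) * V) := by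
  have hc : 0 < Real.exp (-η * V) * D := by positivity
  have ha0 : 0 < a := inv_pos.mp (hc.trans_le ha)
  calc a * b ≤ a * (Real.exp (-γ * V) * D) := by gcongr; exact (div_le_iff₀ hD).mp hb
    _ ≤ (Real.exp (-η * V) * D)⁻¹ * (Real.exp (-γ * V) * D) := by
        gcongr; exact le_inv_of_le_inv₀ hc ha
    _ = Real.exp ((η - γ) * V) := by
        rw [show (η - γ) * V = -γ * V - -η * V by ring, Real.exp_sub]
        field_simp

theorem mixed_state_large_full_effective_dimension_general
    {E : Type*} [NormedAddCommGroup E] [InnerProductSpace ℂ E] [FiniteDimensional ℂ E]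
    (E0 : Submodule ℂ E) {D : ℕ} (hD : 1 ≤ D)
    (Q : E →L[ℂ] E) (hQ : IsSelfAdjoint Q) (hQidem : Q ∘L Q = Q)
    (hQrange : LinearMap.range Q.toLinearMap = E0)
    (H : E →L[ℂ] E) (hH : IsSelfAdjoint H) (hinvar : ∀ x ∈ E0, H x ∈ E0)
    (ρ : E →L[ℂ] E) (hρ : IsSelfAdjoint ρ)
    (hρrange : LinearMap.range ρ.toLinearMap ≤ E0)
    (ρt : ℝ → E →L[ℂ] E)
    (hρt : ∀ t : ℝ, ρt t =
      NormedSpace.exp (((-Complex.I) * (t : ℂ)) • H) ∘L ρ ∘L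
        NormedSpace.exp ((Complex.I * (t : ℂ)) • H))
    (P : E →L[ℂ] E)
    (hP0 : ∀ x : E, 0 ≤ (inner ℂ x (P x) : ℂ).re)
    (hP1 : ∀ x : E, (inner ℂ x (P x) : ℂ).re ≤ ‖x‖ ^ 2)
    (V α ν η γ : ℝ) (hV : 0 < V) (hν : 0 < ν)
    (hgap : 2 * (α + ν) < γ - η)
    (htdb : (LinearMap.trace ℂ E (Q ∘L P ∘L Q).toLinearMap).re / (D : ℝ)
      ≤ Real.exp (-γ * V))
    (heff : Real.exp (-η * V) * (D : ℝ)
      ≤ ((LinearMap.trace ℂ E (ρ ∘L ρ).toLinearMap).re)⁻¹) :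
    ∀ t : ℝ, (LinearMap.trace ℂ E ((ρt t) ∘L P).toLinearMap).re ≤ Real.exp (-α * V) := by
  intro t
  set U := NormedSpace.exp ((-Complex.I * t) • H)
  have hρtU : ρt t = U * ρ * star U := by rw [hρt, hH.star_exp_neg_I_mul_smul]; rfl
  have hρt_sa : IsSelfAdjoint (ρt t) := hρtU ▸ hρ.conjugate U
  have hQproj : IsStarProjection Q := ⟨hQidem, hQ⟩
  have hQH : Commute Q H := hQproj.commute_of_range_mem_invtSubmodule hH (hQrange ▸ hinvar)
  have hQρ : Q * ρ = ρ := ContinuousLinearMap.coe_inj.mp <|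
    (LinearMap.IsIdempotentElem.comp_eq_right_iff
      (ContinuousLinearMap.IsIdempotentElem.toLinearMap hQidem) _).mpr (hQrange ▸ hρrange)
  have hQρt : Q * ρt t = ρt t := by
    rw [hρtU, ← mul_assoc, ← mul_assoc, ((hQH.smul_right _).exp_right).eq, mul_assoc U, hQρ]
  have hpurity : LinearMap.trace ℂ E (ρt t * ρt t).toLinearMap
      = LinearMap.trace ℂ E (ρ * ρ).toLinearMap := by
    rw [hρtU]
    exact ContinuousLinearMap.trace_conj_unitary_mul_self (hH.exp_neg_I_mul_smul_mem_unitary t) ρ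
  have hsq := ContinuousLinearMap.re_trace_mul_sq_le hρt_sa
    (hQ.re_inner_conj_nonneg hP0) (hQproj.re_inner_conj_le_norm_sq hP1)
  rw [← ContinuousLinearMap.trace_mul_eq_trace_mul_conj hQ hρt_sa hQρt, hpurity] at hsq
  have hbound := mul_le_exp_of_le_inv (by exact_mod_cast hD) heff htdb
  calc (LinearMap.trace ℂ E ((ρt t) ∘L P).toLinearMap).re ≤ Real.exp ((η - γ) * V / 2) := by
        refine le_of_sq_le_sq ((hsq.trans hbound).trans_eq ?_) (Real.exp_pos _).le
        rw [sq, ← Real.exp_add, add_halves]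
    _ ≤ Real.exp (-α * V) := Real.exp_le_exp.mpr (by nlinarith)

/-- **Thermal equilibrium of mixed states with large full effective dimension.**  Let `Q` be
the orthogonal projection onto a `D`-dimensional subspace `E₀` invariant under the
self-adjoint Hamiltonian `H`, let `ρ` be a density matrix with range in `E₀` and
`ρ(t) = exp(−itH) ρ exp(itH)`, and let `0 ≤ P ≤ 1`.  If `Tr(QPQ)/D ≤ exp(−γV)` and
`(Tr ρ²)⁻¹ ≥ exp(−ηV)·D` with `γ − η > 2(α+ν)`, then `Tr(ρ(t)P) ≤ exp(−αV)` for all `t`. -/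
theorem mixed_state_large_full_effective_dimension
    {E : Type*} [NormedAddCommGroup E] [InnerProductSpace ℂ E] [FiniteDimensional ℂ E]
    (E0 : Submodule ℂ E) {D : ℕ} (hD : 1 ≤ D) (hdim : Module.finrank ℂ E0 = D)
    (Q : E →L[ℂ] E) (hQ : IsSelfAdjoint Q) (hQidem : Q ∘L Q = Q)
    (hQrange : LinearMap.range Q.toLinearMap = E0)
    (H : E →L[ℂ] E) (hH : IsSelfAdjoint H) (hinvar : ∀ x ∈ E0, H x ∈ E0)
    (ρ : E →L[ℂ] E) (hρ : IsSelfAdjoint ρ)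
    (hρpos : ∀ x : E, 0 ≤ (inner ℂ x (ρ x) : ℂ).re)
    (hρtr : LinearMap.trace ℂ E ρ.toLinearMap = 1)
    (hρrange : LinearMap.range ρ.toLinearMap ≤ E0)
    (ρt : ℝ → E →L[ℂ] E)
    (hρt : ∀ t : ℝ, ρt t =
      NormedSpace.exp (((-Complex.I) * (t : ℂ)) • H) ∘L ρ ∘L
        NormedSpace.exp ((Complex.I * (t : ℂ)) • H))
    (P : E →L[ℂ] E) (hP : IsSelfAdjoint P)
    (hP0 : ∀ x : E, 0 ≤ (inner ℂ x (P x) : ℂ).re)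
    (hP1 : ∀ x : E, (inner ℂ x (P x) : ℂ).re ≤ ‖x‖ ^ 2)
    (V α ν η γ : ℝ) (hV : 0 < V) (hα : 0 < α) (hν : 0 < ν) (hη : 0 ≤ η) (hηγ : η < γ)
    (hgap : 2 * (α + ν) < γ - η)
    (htdb : (LinearMap.trace ℂ E (Q ∘L P ∘L Q).toLinearMap).re / (D : ℝ)
      ≤ Real.exp (-γ * V))
    (heff : Real.exp (-η * V) * (D : ℝ)
      ≤ ((LinearMap.trace ℂ E (ρ ∘L ρ).toLinearMap).re)⁻¹) :
    ∀ t : ℝ, (LinearMap.trace ℂ E ((ρt t) ∘L P).toLinearMap).re ≤ Real.exp (-α * V) :=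
  mixed_state_large_full_effective_dimension_general E0 hD Q hQ hQidem hQrange H hH hinvar ρ hρ
    hρrange ρt hρt P hP0 hP1 V α ν η γ hV hν hgap htdb heff
end

section
/- (Thermalization of mixed initial states with large diagonal effective dimension.) Let E be a finite-dimensional complex inner product space, H a self-adjoint operator on E, and (ψ_j)_{j∈J} an orthonormal family of eigenvectors of H with pairwise distinct eigenvalues, |J| = D ≥ 1. Let ρ be a positive semidefinite operator with Tr ρ = 1 whose range is contained in the span of (ψ_j)_{j∈J}, set ρ(t) := exp(−itH) ρ exp(itH), and let P be a self-adjoint operator with 0 ≤ P ≤ 1. Then the long-time average converges: lim_{τ→∞} (1/τ)∫₀^τ Tr( ρ(t) P ) dt = ∑_{j∈J} ⟨ψ_j, ρ ψ_j⟩·⟨ψ_j, P ψ_j⟩. Moreover, if for constants V > 0, α > 0, ν > 0, 0 ≤ η < γ with γ − η > 2(α+ν) one has (1/D)∑_{j∈J}⟨ψ_j, P ψ_j⟩ ≤ exp(−γV) and D_eff^{diag} := ( ∑_{j∈J} ⟨ψ_j, ρ ψ_j⟩² )^{−1} ≥ exp(−ηV)·D, then there exists τ₀ > 0 such that for every τ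 ≥ τ₀, (1/τ)∫₀^τ Tr( ρ(t) P ) dt ≤ exp(−(α+ν)V). -/
/-!
Expanding `ρ` in the eigenbasis gives `Tr(ρ(t) P) = ∑ⱼₖ ρⱼₖ Pₖⱼ e^{i(Eₖ - Eⱼ)t}`. The time average
of `e^{iωt}` tends to `0` unless `ω = 0`, and the eigenvalues are distinct, so only the diagonal
terms survive. For the bound, Cauchy–Schwarz and `0 ≤ Pⱼⱼ ≤ 1` give
`(∑ⱼ ρⱼⱼ Pⱼⱼ)² ≤ (∑ⱼ ρⱼⱼ²)(∑ⱼ Pⱼⱼ) ≤ e^{(η - γ)V} < e^{-2(α + ν)V}`: the limit lies strictly below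
`e^{-(α + ν)V}`, hence so do the averages over long enough times.
-/

open MeasureTheory Filter InnerProductSpace Topology

section Spectral

variable {𝕜 E ι : Type*} [RCLike 𝕜] [NormedAddCommGroup E] [InnerProductSpace 𝕜 E] [Fintype ι]
  {ψ : ι → E}

theorem Orthonormal.sum_inner_smul_eq_of_mem_span (hψ : Orthonormal 𝕜 ψ) {v : E}
    (hv : v ∈ Submodule.span 𝕜 (Set.range ψ)) : ∑ j, ⟪ψ j, v⟫_𝕜 • ψ j = v := by
  obtain ⟨c, rfl⟩ := (Submodule.mem_span_range_iff_exists_fun 𝕜).mp hv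
  simp_rw [hψ.inner_right_fintype]

variable [CompleteSpace E] {T : E →L[𝕜] E}

theorem Orthonormal.eq_sum_rankOne_of_range_le_span (hψ : Orthonormal 𝕜 ψ)
    (hT : IsSelfAdjoint T)
    (hrange : LinearMap.range T.toLinearMap ≤ Submodule.span 𝕜 (Set.range ψ)) :
    T = ∑ j, ∑ k, ⟪ψ j, T (ψ k)⟫_𝕜 • rankOne 𝕜 (ψ j) (ψ k) := by
  have hsymm : ∀ x y, ⟪T x, y⟫_𝕜 = ⟪x, T y⟫_𝕜 := hT.isSymmetric
  have hmem : ∀ y, T y ∈ Submodule.span 𝕜 (Set.range ψ) := fun y => hrange ⟨y, rfl⟩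
  ext x
  have hcoeff : ∀ j, ⟪ψ j, T x⟫_𝕜 = ∑ k, ⟪ψ j, T (ψ k)⟫_𝕜 * ⟪ψ k, x⟫_𝕜 := by
    intro j
    rw [← hsymm, ← hψ.sum_inner_smul_eq_of_mem_span (hmem (ψ j)), sum_inner]
    refine Finset.sum_congr rfl fun k _ => ?_
    rw [inner_smul_left, inner_conj_symm, ← hsymm]
  rw [← hψ.sum_inner_smul_eq_of_mem_span (hmem x)]
  simp [hcoeff, Finset.sum_smul, smul_smul]

theorem Orthonormal.trace_comp_eq_sum_of_range_le_span [FiniteDimensional 𝕜 E]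
    (hψ : Orthonormal 𝕜 ψ) (hT : IsSelfAdjoint T)
    (hrange : LinearMap.range T.toLinearMap ≤ Submodule.span 𝕜 (Set.range ψ)) (M : E →L[𝕜] E) :
    LinearMap.trace 𝕜 E (M ∘L T).toLinearMap =
      ∑ j, ∑ k, ⟪ψ j, T (ψ k)⟫_𝕜 * ⟪ψ k, M (ψ j)⟫_𝕜 := by
  nth_rw 1 [hψ.eq_sum_rankOne_of_range_le_span hT hrange]
  simp [ContinuousLinearMap.comp_finsetSum, comp_rankOne, trace_rankOne, map_sum]

end Spectral

theorem NormedSpace.exp_apply_of_apply_eq_smul {𝕂 E : Type*} [RCLike 𝕂] [NormedAddCommGroup E]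
    [NormedSpace 𝕂 E] [CompleteSpace E] {A : E →L[𝕂] E} {x : E} {a : 𝕂} (h : A x = a • x) :
    NormedSpace.exp A x = NormedSpace.exp a • x := by
  have hpow : ∀ n : ℕ, (A ^ n) x = a ^ n • x := by
    intro n
    induction n with
    | zero => simp
    | succ n ih => rw [pow_succ', mul_apply_eq_comp, ih, map_smul, h, smul_smul, pow_succ]
  have hA := (NormedSpace.exp_series_hasSum_exp' (𝕂 := 𝕂) A).mapL (ContinuousLinearMap.apply 𝕂 E x)
  have ha := (NormedSpace.exp_series_hasSum_exp' (𝕂 := 𝕂) a).smul_const x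
  refine hA.unique ?_
  simpa [hpow, smul_smul] using ha

theorem IsSelfAdjoint.inner_exp_smul_apply_of_apply_eq_smul {E : Type*} [NormedAddCommGroup E]
    [InnerProductSpace ℂ E] [CompleteSpace E] {H : E →L[ℂ] E} (hH : IsSelfAdjoint H) {v : E} {e : ℝ}
    (hv : H v = (e : ℂ) • v) (c : ℂ) (y : E) :
    ⟪v, NormedSpace.exp (c • H) y⟫_ℂ = Complex.exp (c * e) * ⟪v, y⟫_ℂ := by
  have hadj : ContinuousLinearMap.adjoint (NormedSpace.exp (c • H)) =
      NormedSpace.exp (star c • H) := by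
    rw [← ContinuousLinearMap.star_eq_adjoint, NormedSpace.star_exp, star_smul, hH.star_eq]
  have heig : (star c • H) v = (star c * e) • v := by
    rw [smul_apply, hv, smul_smul]
  rw [← ContinuousLinearMap.adjoint_inner_left, hadj, NormedSpace.exp_apply_of_apply_eq_smul heig,
    inner_smul_left, ← Complex.exp_eq_exp_ℂ, ← Complex.exp_conj]
  simp

theorem tendsto_inv_smul_integral_cexp_I_mul (ω : ℝ) :
    Tendsto (fun τ : ℝ => τ⁻¹ • ∫ t in (0:ℝ)..τ, Complex.exp (Complex.I * ω * t)) atTop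
      (𝓝 (if ω = 0 then 1 else 0)) := by
  split_ifs with hω
  · refine tendsto_const_nhds.congr' ?_
    filter_upwards [eventually_ne_atTop 0] with τ hτ
    simp [hω, hτ]
  have hc : Complex.I * ω ≠ 0 := by simpa using hω
  have hint : ∀ τ : ℝ, ∫ t in (0:ℝ)..τ, Complex.exp (Complex.I * ω * t) =
      (Complex.exp (Complex.I * ω * τ) - 1) / (Complex.I * ω) := by
    simpa using fun τ => integral_exp_mul_complex (a := 0) (b := τ) hc
  simp_rw [hint]
  refine tendsto_inv_atTop_zero.zero_smul_isBoundedUnder_le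
    (isBoundedUnder_of ⟨2 / ‖Complex.I * ω‖, fun τ => ?_⟩)
  rw [Function.comp_apply, norm_div]
  gcongr
  calc ‖Complex.exp (Complex.I * ω * τ) - 1‖
      ≤ ‖Complex.exp (Complex.I * ω * τ)‖ + ‖(1 : ℂ)‖ := norm_sub_le _ _
    _ = 2 := by norm_num [Complex.norm_exp]

theorem tendsto_average_re_sum_mul_cexp {ι : Type*} [Fintype ι] (c : ι → ℂ) (ω : ι → ℝ) :
    Tendsto (fun τ : ℝ =>
        (1 / τ) * ∫ t in (0:ℝ)..τ, (∑ q, c q * Complex.exp (Complex.I * ω q * t)).re)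
      atTop (𝓝 (∑ q, if ω q = 0 then (c q).re else 0)) := by
  have hcont : ∀ q, Continuous fun t : ℝ => c q * Complex.exp (Complex.I * ω q * t) := by
    intro q; fun_prop
  have havg : ∀ τ : ℝ, (1 / τ) * ∫ t in (0:ℝ)..τ, (∑ q, c q * Complex.exp (Complex.I * ω q * t)).re
      = (∑ q, c q * τ⁻¹ • ∫ t in (0:ℝ)..τ, Complex.exp (Complex.I * ω q * t)).re := by
    intro τ
    have hre : ∫ t in (0:ℝ)..τ, (∑ q, c q * Complex.exp (Complex.I * ω q * t)).re
        = (∫ t in (0:ℝ)..τ, ∑ q, c q * Complex.exp (Complex.I * ω q * t)).re :=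
      intervalIntegral.intervalIntegral_re
        ((continuous_finsetSum Finset.univ fun q _ => hcont q).intervalIntegrable _ _)
    rw [hre, one_div, ← smul_eq_mul, ← Complex.smul_re,
      intervalIntegral.integral_finsetSum fun q _ => (hcont q).intervalIntegrable _ _,
      Finset.smul_sum]
    simp_rw [intervalIntegral.integral_const_mul, mul_smul_comm]
  have hlim := Complex.continuous_re.tendsto _ |>.comp <|
    tendsto_finsetSum Finset.univ fun q _ =>
      (tendsto_inv_smul_integral_cexp_I_mul (ω q)).const_mul (c q)
  have hval : (∑ q, c q * if ω q = 0 then 1 else 0).re = ∑ q, if ω q = 0 then (c q).re else 0 := by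
    simp [Complex.re_sum, apply_ite]
  rw [← hval]
  exact hlim.congr fun τ => (havg τ).symm

theorem sq_sum_mul_le_sum_sq_mul_sum {ι : Type*} (s : Finset ι) (r p : ι → ℝ)
    (hp0 : ∀ j ∈ s, 0 ≤ p j) (hp1 : ∀ j ∈ s, p j ≤ 1) :
    (∑ j ∈ s, r j * p j) ^ 2 ≤ (∑ j ∈ s, r j ^ 2) * ∑ j ∈ s, p j :=
  calc (∑ j ∈ s, r j * p j) ^ 2 ≤ (∑ j ∈ s, r j ^ 2) * ∑ j ∈ s, p j ^ 2 :=
        Finset.sum_mul_sq_le_sq_mul_sq s r p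
    _ ≤ (∑ j ∈ s, r j ^ 2) * ∑ j ∈ s, p j := by
        gcongr with j hj
        nlinarith [hp0 j hj, hp1 j hj]

theorem sum_mul_lt_exp_of_sum_le_of_le_inv_sum_sq {ι : Type*} (s : Finset ι) (r p : ι → ℝ)
    (hp0 : ∀ j ∈ s, 0 ≤ p j) (hp1 : ∀ j ∈ s, p j ≤ 1) {D V α ν η γ : ℝ} (hD : 0 < D)
    (hV : 0 < V) (hgap : 2 * (α + ν) < γ - η)
    (hp : 1 / D * ∑ j ∈ s, p j ≤ Real.exp (-γ * V))
    (hr : Real.exp (-η * V) * D ≤ (∑ j ∈ s, r j ^ 2)⁻¹) :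
    ∑ j ∈ s, r j * p j < Real.exp (-(α + ν) * V) := by
  have hr' : ∑ j ∈ s, r j ^ 2 ≤ (Real.exp (-η * V) * D)⁻¹ := by
    simpa using inv_anti₀ (by positivity) hr
  have hp' : ∑ j ∈ s, p j ≤ D * Real.exp (-γ * V) := by
    rwa [one_div, inv_mul_le_iff₀ hD] at hp
  have hsq : (∑ j ∈ s, r j * p j) ^ 2 < Real.exp (-(α + ν) * V) ^ 2 :=
    calc (∑ j ∈ s, r j * p j) ^ 2 ≤ (∑ j ∈ s, r j ^ 2) * ∑ j ∈ s, p j :=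
          sq_sum_mul_le_sum_sq_mul_sum s r p hp0 hp1
      _ ≤ (Real.exp (-η * V) * D)⁻¹ * (D * Real.exp (-γ * V)) :=
          mul_le_mul hr' hp' (Finset.sum_nonneg hp0) (by positivity)
      _ = Real.exp ((η - γ) * V) := by
          field_simp
          rw [← Real.exp_add]
          ring_nf
      _ < Real.exp (-(α + ν) * V) ^ 2 := by
          rw [← Real.exp_nat_mul]
          exact Real.exp_lt_exp.2 (by push_cast; nlinarith)
  exact (le_abs_self _).trans_lt (abs_lt_of_sq_lt_sq hsq (Real.exp_pos _).le)

section Evolution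

variable {E J : Type*} [NormedAddCommGroup E] [InnerProductSpace ℂ E] [FiniteDimensional ℂ E]
  [Fintype J] {H ρ : E →L[ℂ] E} {ψ : J → E} {Ej : J → ℝ}

theorem trace_conj_exp_comp_eq_sum (hH : IsSelfAdjoint H) (hψ : Orthonormal ℂ ψ)
    (heig : ∀ j, H (ψ j) = (Ej j : ℂ) • ψ j) (hρ : IsSelfAdjoint ρ)
    (hρrange : LinearMap.range ρ.toLinearMap ≤ Submodule.span ℂ (Set.range ψ))
    (P : E →L[ℂ] E) (t : ℝ) :
    LinearMap.trace ℂ E ((NormedSpace.exp ((-Complex.I * t) • H) ∘L ρ ∘L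
        NormedSpace.exp ((Complex.I * t) • H)) ∘L P).toLinearMap =
      ∑ q : J × J, ⟪ψ q.1, ρ (ψ q.2)⟫_ℂ * ⟪ψ q.2, P (ψ q.1)⟫_ℂ *
        Complex.exp (Complex.I * (Ej q.2 - Ej q.1 : ℝ) * t) := by
  set A := NormedSpace.exp ((-Complex.I * t) • H)
  set B := NormedSpace.exp ((Complex.I * t) • H)
  have hA : ∀ j, A (ψ j) = Complex.exp (-Complex.I * t * Ej j) • ψ j := fun j => by
    rw [Complex.exp_eq_exp_ℂ]
    exact NormedSpace.exp_apply_of_apply_eq_smul (by rw [smul_apply, heig, smul_smul])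
  have hcyc : LinearMap.trace ℂ E ((A ∘L ρ ∘L B) ∘L P).toLinearMap =
      LinearMap.trace ℂ E ((B ∘L P ∘L A) ∘L ρ).toLinearMap := by
    simp only [ContinuousLinearMap.toLinearMap_comp, LinearMap.comp_assoc]
    rw [LinearMap.trace_comp_comm', LinearMap.comp_assoc, LinearMap.trace_comp_comm']
    simp only [LinearMap.comp_assoc]
  rw [hcyc, hψ.trace_comp_eq_sum_of_range_le_span hρ hρrange, Fintype.sum_prod_type]
  refine Finset.sum_congr rfl fun j _ => Finset.sum_congr rfl fun k _ => ?_
  dsimp only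
  rw [ContinuousLinearMap.comp_apply, ContinuousLinearMap.comp_apply,
    hH.inner_exp_smul_apply_of_apply_eq_smul (heig k), hA, map_smul, inner_smul_right]
  have hexp : Complex.exp (Complex.I * (Ej k - Ej j : ℝ) * t) =
      Complex.exp (Complex.I * t * Ej k) * Complex.exp (-Complex.I * t * Ej j) := by
    rw [← Complex.exp_add]
    push_cast
    ring_nf
  rw [hexp]
  ring

theorem tendsto_average_re_trace_conj_exp_comp (hH : IsSelfAdjoint H) (hψ : Orthonormal ℂ ψ)
    (heig : ∀ j, H (ψ j) = (Ej j : ℂ) • ψ j) (hρ : IsSelfAdjoint ρ)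
    (hρrange : LinearMap.range ρ.toLinearMap ≤ Submodule.span ℂ (Set.range ψ))
    (hEj : Function.Injective Ej) (P : E →L[ℂ] E) :
    Tendsto (fun τ : ℝ => (1 / τ) * ∫ t in (0:ℝ)..τ,
        (LinearMap.trace ℂ E ((NormedSpace.exp ((-Complex.I * t) • H) ∘L ρ ∘L
          NormedSpace.exp ((Complex.I * t) • H)) ∘L P).toLinearMap).re)
      atTop (𝓝 (∑ j, (⟪ψ j, ρ (ψ j)⟫_ℂ).re * (⟪ψ j, P (ψ j)⟫_ℂ).re)) := by
  classical
  simp_rw [trace_conj_exp_comp_eq_sum hH hψ heig hρ hρrange P]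
  convert tendsto_average_re_sum_mul_cexp
    (fun q : J × J => ⟪ψ q.1, ρ (ψ q.2)⟫_ℂ * ⟪ψ q.2, P (ψ q.1)⟫_ℂ)
    (fun q => Ej q.2 - Ej q.1) using 2
  have hreal : ∀ j, (⟪ψ j, ρ (ψ j)⟫_ℂ).im = 0 :=
    fun j => hρ.isSymmetric.im_inner_self_apply (ψ j)
  -- the eigenvalues are distinct, so only the diagonal terms `j = k` survive
  simp only [Fintype.sum_prod_type, sub_eq_zero, hEj.eq_iff]
  simp [Complex.mul_re, hreal]

end Evolution

theorem mixed_state_thermalization_diagonal_effective_dimension_general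
    {E : Type*} [NormedAddCommGroup E] [InnerProductSpace ℂ E] [FiniteDimensional ℂ E]
    (H : E →L[ℂ] E) (hH : IsSelfAdjoint H)
    {J : Type*} [Fintype J] {D : ℕ} (hD : 1 ≤ D)
    (ψ : J → E) (hψ : Orthonormal ℂ ψ)
    (Ej : J → ℝ) (hEj : Function.Injective Ej)
    (heig : ∀ j, H (ψ j) = (Ej j : ℂ) • ψ j)
    (ρ : E →L[ℂ] E) (hρ : IsSelfAdjoint ρ)
    (hρrange : LinearMap.range ρ.toLinearMap ≤ Submodule.span ℂ (Set.range ψ))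
    (ρt : ℝ → E →L[ℂ] E)
    (hρt : ∀ t : ℝ, ρt t =
      NormedSpace.exp (((-Complex.I) * (t : ℂ)) • H) ∘L ρ ∘L
        NormedSpace.exp ((Complex.I * (t : ℂ)) • H))
    (P : E →L[ℂ] E)
    (hP0 : ∀ x : E, 0 ≤ (inner ℂ x (P x) : ℂ).re)
    (hP1 : ∀ x : E, (inner ℂ x (P x) : ℂ).re ≤ ‖x‖ ^ 2) :
    Tendsto (fun τ : ℝ =>
        (1 / τ) * ∫ t in (0:ℝ)..τ, (LinearMap.trace ℂ E ((ρt t) ∘L P).toLinearMap).re)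
      atTop
      (nhds (∑ j, (inner ℂ (ψ j) (ρ (ψ j)) : ℂ).re * (inner ℂ (ψ j) (P (ψ j)) : ℂ).re)) ∧
    (∀ V α ν η γ : ℝ, 0 < V → 0 < α → 0 < ν → 0 ≤ η → η < γ → 2 * (α + ν) < γ - η →
      (1 / (D : ℝ)) * ∑ j, (inner ℂ (ψ j) (P (ψ j)) : ℂ).re ≤ Real.exp (-γ * V) →
      Real.exp (-η * V) * (D : ℝ) ≤ (∑ j, ((inner ℂ (ψ j) (ρ (ψ j)) : ℂ).re) ^ 2)⁻¹ →
      ∃ τ0 : ℝ, 0 < τ0 ∧ ∀ τ : ℝ, τ0 ≤ τ →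
        (1 / τ) * ∫ t in (0:ℝ)..τ, (LinearMap.trace ℂ E ((ρt t) ∘L P).toLinearMap).re
          ≤ Real.exp (-(α + ν) * V)) := by
  obtain rfl : ρt = _ := funext hρt
  have hlim := tendsto_average_re_trace_conj_exp_comp hH hψ heig hρ hρrange hEj P
  refine ⟨hlim, fun V α ν η γ hV _ _ _ _ hgap hPmicro hDeff => ?_⟩
  have hlt := sum_mul_lt_exp_of_sum_le_of_le_inv_sum_sq Finset.univ _ _
    (fun j _ => hP0 (ψ j)) (fun j _ => by simpa [hψ.1 j] using hP1 (ψ j))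
    (by exact_mod_cast hD) hV hgap hPmicro hDeff
  obtain ⟨τ₁, hτ₁⟩ := eventually_atTop.mp (hlim.eventually_lt_const hlt)
  exact ⟨max τ₁ 1, by positivity, fun τ hτ => (hτ₁ τ (le_of_max_le_left hτ)).le⟩

/-- **Thermalization of mixed initial states with large diagonal effective dimension.**
For a density matrix `ρ` with range in the span of an orthonormal family `(ψ_j)` of
eigenvectors of `H` with pairwise distinct eigenvalues, and `ρ(t) = exp(−itH) ρ exp(itH)`,
the long-time average of `Tr(ρ(t)P)` converges to `∑_j ⟪ψ_j, ρ ψ_j⟫·⟪ψ_j, P ψ_j⟫`.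
Moreover, under the thermodynamic bound `(1/D)∑_j ⟪ψ_j, P ψ_j⟫ ≤ exp(−γV)` and the diagonal
effective-dimension bound `(∑_j ⟪ψ_j, ρ ψ_j⟫²)⁻¹ ≥ exp(−ηV)·D` with `γ − η > 2(α+ν)`, the
time average over `[0,τ]` is at most `exp(−(α+ν)V)` for all sufficiently large `τ`. -/
theorem mixed_state_thermalization_diagonal_effective_dimension
    {E : Type*} [NormedAddCommGroup E] [InnerProductSpace ℂ E] [FiniteDimensional ℂ E]
    (H : E →L[ℂ] E) (hH : IsSelfAdjoint H)
    {J : Type*} [Fintype J] {D : ℕ} (hD : 1 ≤ D) (hcard : Fintype.card J = D)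
    (ψ : J → E) (hψ : Orthonormal ℂ ψ)
    (Ej : J → ℝ) (hEj : Function.Injective Ej)
    (heig : ∀ j, H (ψ j) = (Ej j : ℂ) • ψ j)
    (ρ : E →L[ℂ] E) (hρ : IsSelfAdjoint ρ)
    (hρpos : ∀ x : E, 0 ≤ (inner ℂ x (ρ x) : ℂ).re)
    (hρtr : LinearMap.trace ℂ E ρ.toLinearMap = 1)
    (hρrange : LinearMap.range ρ.toLinearMap ≤ Submodule.span ℂ (Set.range ψ))
    (ρt : ℝ → E →L[ℂ] E)
    (hρt : ∀ t : ℝ, ρt t =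
      NormedSpace.exp (((-Complex.I) * (t : ℂ)) • H) ∘L ρ ∘L
        NormedSpace.exp ((Complex.I * (t : ℂ)) • H))
    (P : E →L[ℂ] E) (hP : IsSelfAdjoint P)
    (hP0 : ∀ x : E, 0 ≤ (inner ℂ x (P x) : ℂ).re)
    (hP1 : ∀ x : E, (inner ℂ x (P x) : ℂ).re ≤ ‖x‖ ^ 2) :
    Tendsto (fun τ : ℝ =>
        (1 / τ) * ∫ t in (0:ℝ)..τ, (LinearMap.trace ℂ E ((ρt t) ∘L P).toLinearMap).re)
      atTop
      (nhds (∑ j, (inner ℂ (ψ j) (ρ (ψ j)) : ℂ).re * (inner ℂ (ψ j) (P (ψ j)) : ℂ).re)) ∧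
    (∀ V α ν η γ : ℝ, 0 < V → 0 < α → 0 < ν → 0 ≤ η → η < γ → 2 * (α + ν) < γ - η →
      (1 / (D : ℝ)) * ∑ j, (inner ℂ (ψ j) (P (ψ j)) : ℂ).re ≤ Real.exp (-γ * V) →
      Real.exp (-η * V) * (D : ℝ) ≤ (∑ j, ((inner ℂ (ψ j) (ρ (ψ j)) : ℂ).re) ^ 2)⁻¹ →
      ∃ τ0 : ℝ, 0 < τ0 ∧ ∀ τ : ℝ, τ0 ≤ τ →
        (1 / τ) * ∫ t in (0:ℝ)..τ, (LinearMap.trace ℂ E ((ρt t) ∘L P).toLinearMap).re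
          ≤ Real.exp (-(α + ν) * V)) :=
  mixed_state_thermalization_diagonal_effective_dimension_general H hH hD ψ hψ Ej hEj heig ρ hρ
    hρrange ρt hρt P hP0 hP1
end
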